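/- arXiv:1610.09595 — 8 statements merged into one kernel-verified Lean document; each statement's English description precedes it below -/
import Mathlib

section
/- Define f(s) = 1 + [(2-b)(s-1)² + (2-2b)(s-1)]/(2s²) - s + b·ln(s) for s ∈ (0,1], where b > 1 is a constant. Then f(1) = 0 and f'(s) = -(b-s)(1-s²)/s³ < 0 for all s ∈ (0,1); consequently f(s) > 0 for all s ∈ (0,1). -/
/-!
For `b ≥ 1` both factors `b - s` and `1 - s²` of the derivative are positive on `(0, 1)`, so `f`
is strictly decreasing on `(0, 1]` and hence stays above its value `f 1 = 0`.
-/

open Real Set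

noncomputable section

namespace EulerPoisson

def auxEnergy (b s : ℝ) : ℝ :=
  1 + ((2 - b) * (s - 1) ^ 2 + (2 - 2 * b) * (s - 1)) / (2 * s ^ 2) - s + b * log s

variable {b : ℝ}

theorem auxEnergy_one : auxEnergy b 1 = 0 := by
  simp [auxEnergy]

theorem hasDerivAt_auxEnergy {s : ℝ} (hs : s ≠ 0) :
    HasDerivAt (auxEnergy b) (-((b - s) * (1 - s ^ 2) / s ^ 3)) s := by
  have hshift : HasDerivAt (fun s : ℝ => s - 1) 1 s := (hasDerivAt_id s).sub_const 1
  have hnum : HasDerivAt (fun s : ℝ => (2 - b) * (s - 1) ^ 2 + (2 - 2 * b) * (s - 1))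
      ((2 - b) * (2 * (s - 1) ^ 1 * 1) + (2 - 2 * b) * 1) s :=
    ((hshift.pow 2).const_mul (2 - b)).add (hshift.const_mul (2 - 2 * b))
  have hden : HasDerivAt (fun s : ℝ => 2 * s ^ 2) (2 * (2 * s ^ 1)) s :=
    (hasDerivAt_pow 2 s).const_mul 2
  have hsum := (((hnum.div hden (by positivity)).const_add 1).sub (hasDerivAt_id s)).add
    ((hasDerivAt_log hs).const_mul b)
  refine hsum.congr_deriv ?_
  field_simp
  ring

theorem auxEnergy_deriv_neg (hb : 1 ≤ b) {s : ℝ} (hs : s ∈ Ioo (0 : ℝ) 1) :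
    -((b - s) * (1 - s ^ 2) / s ^ 3) < 0 := by
  obtain ⟨hs0, hs1⟩ := hs
  have hbs : 0 < b - s := by linarith
  have hsq : 0 < 1 - s ^ 2 := by nlinarith
  have : 0 < (b - s) * (1 - s ^ 2) / s ^ 3 := by positivity
  linarith

theorem strictAntiOn_auxEnergy (hb : 1 ≤ b) : StrictAntiOn (auxEnergy b) (Ioc 0 1) := by
  refine strictAntiOn_of_deriv_neg (convex_Ioc 0 1) (fun s hs => ?_) (fun s hs => ?_)
  · exact (hasDerivAt_auxEnergy hs.1.ne').continuousAt.continuousWithinAt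
  · rw [interior_Ioc] at hs
    rw [(hasDerivAt_auxEnergy hs.1.ne').deriv]
    exact auxEnergy_deriv_neg hb hs

theorem auxEnergy_pos (hb : 1 ≤ b) {s : ℝ} (hs : s ∈ Ioo (0 : ℝ) 1) : 0 < auxEnergy b s := by
  have := strictAntiOn_auxEnergy hb ⟨hs.1, hs.2.le⟩ ⟨one_pos, le_rfl⟩ hs.2
  rwa [auxEnergy_one] at this

end EulerPoisson

end

/-- For `b > 1`, the function
`f(s) = 1 + [(2-b)(s-1)² + (2-2b)(s-1)]/(2s²) - s + b·ln s` on `(0,1]`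
satisfies `f(1) = 0`, `f'(s) = -(b-s)(1-s²)/s³ < 0` on `(0,1)`, and
consequently `f(s) > 0` on `(0,1)`. -/
theorem stmt_7 (b : ℝ) (hb : 1 < b)
    (f : ℝ → ℝ)
    (hf : ∀ s : ℝ, f s = 1 + ((2 - b)*(s - 1)^2 + (2 - 2*b)*(s - 1))/(2*s^2)
      - s + b * Real.log s) :
    f 1 = 0 ∧
    (∀ s ∈ Set.Ioo (0:ℝ) 1,
      HasDerivAt f (-((b - s)*(1 - s^2)/s^3)) s ∧ -((b - s)*(1 - s^2)/s^3) < 0) ∧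
    (∀ s ∈ Set.Ioo (0:ℝ) 1, 0 < f s) := by
  obtain rfl : f = EulerPoisson.auxEnergy b := funext hf
  exact ⟨EulerPoisson.auxEnergy_one,
    fun s hs => ⟨EulerPoisson.hasDerivAt_auxEnergy hs.1.ne',
      EulerPoisson.auxEnergy_deriv_neg hb.le hs⟩,
    fun s hs => EulerPoisson.auxEnergy_pos hb.le hs⟩
end

section
/- Let (ρ, E) be a C¹ solution on [0,L] of the system (1 - 1/ρ²)ρ_x = ρE, E_x = ρ - b with constant b > 1 and 0 < ρ(x) < 1 on (0,L). Then along the solution, the quantity E²(x)/2 - (2ρ(x) - b)/(2ρ²(x)) - ρ(x) + b·ln ρ(x) is constant in x. -/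
/-!
Writing `F(ρ, E) = E²/2 - (2ρ - b)/(2ρ²) - ρ + b log ρ`, one has `∂F/∂E = E` and
`∂F/∂ρ = (1 - 1/ρ²)(b - ρ)/ρ`. Along a solution the second equation turns `E · E_x` into
`E (ρ - b)`, while the first turns `(1 - 1/ρ²) ρ_x / ρ` into `E`, so the two contributions to
`d/dx F(ρ, E)` cancel and `F` is constant on `[0, L]`.
-/

open Set

theorem eq_of_hasDerivWithinAt_zero_Icc {F : Type*} [NormedAddCommGroup F] [NormedSpace ℝ F]
    {f : ℝ → F} {a b : ℝ} (hf : ∀ x ∈ Icc a b, HasDerivWithinAt f 0 (Icc a b) x) :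
    ∀ x ∈ Icc a b, ∀ y ∈ Icc a b, f x = f y := by
  have hconst : ∀ x ∈ Icc a b, f x = f a :=
    constant_of_has_deriv_right_zero (fun x hx => (hf x hx).continuousWithinAt) fun x hx =>
      (hf x (Ico_subset_Icc_self hx)).mono_of_mem_nhdsWithin (Icc_mem_nhdsGE_of_mem hx)
  intro x hx y hy
  rw [hconst x hx, hconst y hy]

noncomputable def eulerPoissonIntegral (b ρ E : ℝ) : ℝ :=
  E ^ 2 / 2 - (2 * ρ - b) / (2 * ρ ^ 2) - ρ + b * Real.log ρ

theorem HasDerivWithinAt.eulerPoissonIntegral {b : ℝ} {ρ E : ℝ → ℝ} {ρ' E' : ℝ} {s : Set ℝ}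
    {x : ℝ} (hρ : HasDerivWithinAt ρ ρ' s x) (hE : HasDerivWithinAt E E' s x) (hρx : ρ x ≠ 0) :
    HasDerivWithinAt (fun x => eulerPoissonIntegral b (ρ x) (E x))
      (E x * E' + (1 - 1 / ρ x ^ 2) * ρ' * (b - ρ x) / ρ x) s x := by
  have hρsq : 2 * ρ x ^ 2 ≠ 0 := by positivity
  have hd := ((((hE.pow 2).div_const 2).sub
    (((hρ.const_mul 2).sub_const b).div ((hρ.pow 2).const_mul 2) hρsq)).sub hρ).add
    ((hρ.log hρx).const_mul b)
  refine hd.congr_deriv ?_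
  simp only [Pi.pow_apply]
  field_simp
  ring

theorem stmt_8_general (L b : ℝ) (ρ E ρ' E' : ℝ → ℝ)
    (hρ : ∀ x ∈ Set.Icc (0:ℝ) L, HasDerivWithinAt ρ (ρ' x) (Set.Icc (0:ℝ) L) x)
    (hE : ∀ x ∈ Set.Icc (0:ℝ) L, HasDerivWithinAt E (E' x) (Set.Icc (0:ℝ) L) x)
    (heq1 : ∀ x ∈ Set.Icc (0:ℝ) L, (1 - 1/(ρ x)^2) * ρ' x = ρ x * E x)
    (heq2 : ∀ x ∈ Set.Icc (0:ℝ) L, E' x = ρ x - b)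
    (hpos : ∀ x ∈ Set.Icc (0:ℝ) L, 0 < ρ x) :
    ∀ x ∈ Set.Icc (0:ℝ) L, ∀ y ∈ Set.Icc (0:ℝ) L,
      (E x)^2/2 - (2*ρ x - b)/(2*(ρ x)^2) - ρ x + b * Real.log (ρ x)
        = (E y)^2/2 - (2*ρ y - b)/(2*(ρ y)^2) - ρ y + b * Real.log (ρ y) := by
  refine eq_of_hasDerivWithinAt_zero_Icc (f := fun x => eulerPoissonIntegral b (ρ x) (E x)) ?_
  intro x hx
  have hρx := (hpos x hx).ne'
  have hzero : E x * E' x + (1 - 1 / ρ x ^ 2) * ρ' x * (b - ρ x) / ρ x = 0 := by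
    rw [heq1 x hx, heq2 x hx]
    field_simp
    ring
  exact ((hρ x hx).eulerPoissonIntegral (hE x hx) hρx).congr_deriv hzero

/-- First integral of the steady Euler–Poisson system without semiconductor effect:
if `(ρ,E)` is a `C¹` solution on `[0,L]` of `(1 - 1/ρ²)ρ_x = ρE`, `E_x = ρ - b`
with constant `b > 1`, `ρ > 0` on `[0,L]` and `0 < ρ < 1` on `(0,L)`, then
`E²/2 - (2ρ-b)/(2ρ²) - ρ + b·ln ρ` is constant along the solution. -/
theorem stmt_8 (L b : ℝ) (hL : 0 < L) (hb : 1 < b) (ρ E ρ' E' : ℝ → ℝ)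
    (hρ : ∀ x ∈ Set.Icc (0:ℝ) L, HasDerivWithinAt ρ (ρ' x) (Set.Icc (0:ℝ) L) x)
    (hE : ∀ x ∈ Set.Icc (0:ℝ) L, HasDerivWithinAt E (E' x) (Set.Icc (0:ℝ) L) x)
    (hρctm : ContinuousOn ρ' (Set.Icc (0:ℝ) L))
    (hEctm : ContinuousOn E' (Set.Icc (0:ℝ) L))
    (heq1 : ∀ x ∈ Set.Icc (0:ℝ) L, (1 - 1/(ρ x)^2) * ρ' x = ρ x * E x)
    (heq2 : ∀ x ∈ Set.Icc (0:ℝ) L, E' x = ρ x - b)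
    (hpos : ∀ x ∈ Set.Icc (0:ℝ) L, 0 < ρ x)
    (hsup : ∀ x ∈ Set.Ioo (0:ℝ) L, ρ x < 1) :
    ∀ x ∈ Set.Icc (0:ℝ) L, ∀ y ∈ Set.Icc (0:ℝ) L,
      (E x)^2/2 - (2*ρ x - b)/(2*(ρ x)^2) - ρ x + b * Real.log (ρ x)
        = (E y)^2/2 - (2*ρ y - b)/(2*(ρ y)^2) - ρ y + b * Real.log (ρ y) :=
  stmt_8_general L b ρ E ρ' E' hρ hE heq1 heq2 hpos
end

section
/- Assume 0 < b(x) ≤ b̄ ≤ 1 for a.e. x ∈ (0,1). Then there is no interior subsonic solution to the degenerate elliptic equation [((1/ρ) - (1/ρ³))ρ_x]_x + (1/τ)(1/ρ)_x - (ρ - b) = 0 with sonic boundary ρ(0) = ρ(1) = 1, i.e. no weak solution with ρ ≥ 1 on [0,1], ρ > 1 on a set of positive measure, and (ρ-1)² ∈ H¹₀(0,1). -/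
/-!
Test the weak formulation with `φ = (ρ - 1)²`. Since `ρ ≥ 1`, we have `1/ρ = g((ρ - 1)²)` with
`g u = 1/(1 + √u)` continuous, so `φ'/ρ = (g ∘ φ) φ'` is an exact derivative and the `τ`-term
integrates to zero by the change of variables `u = φ x`, although `ρ` itself need not be
differentiable where `ρ = 1`. The source term `(ρ - b)(ρ - 1)²` is nonnegative because
`b ≤ b̄ ≤ 1 ≤ ρ`. The remaining term `∫ (ρ + 1)/ρ³ φ'²` is strictly positive: `φ` vanishes at `0`
but not at a point where `ρ > 1`, so by the mean value theorem `φ'` does not vanish identically.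
-/

open Set Filter MeasureTheory intervalIntegral Topology

lemma intervalIntegral_pos_of_continuousOn_of_nonneg {f : ℝ → ℝ} {a b c : ℝ}
    (hf : ContinuousOn f (Icc a b)) (hf₀ : ∀ x ∈ Icc a b, 0 ≤ f x) (hc : c ∈ Ioo a b)
    (hfc : 0 < f c) : 0 < ∫ x in a..b, f x := by
  have hab : a < b := hc.1.trans hc.2
  have hnonneg : 0 ≤ᵐ[volume.restrict (uIoc a b)] f := by
    rw [uIoc_of_le hab.le]
    exact ae_restrict_of_forall_mem measurableSet_Ioc fun x hx => hf₀ x (Ioc_subset_Icc_self hx)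
  rw [integral_pos_iff_support_of_nonneg_ae' hnonneg (hf.intervalIntegrable_of_Icc hab.le)]
  have hpos : ∀ᶠ x in 𝓝 c, 0 < f x :=
    (hf.continuousAt (Icc_mem_nhds hc.1 hc.2)).eventually (lt_mem_nhds hfc)
  exact ⟨hab, Measure.measure_pos_of_mem_nhds volume
    (inter_mem (hpos.mono fun x hx => hx.ne') (Ioc_mem_nhds hc.1 hc.2))⟩

lemma exists_mem_Ioo_hasDerivWithinAt_ne_zero {f f' : ℝ → ℝ} {a b x : ℝ}
    (hf : ∀ y ∈ Icc a b, HasDerivWithinAt f (f' y) (Icc a b) y) (hx : x ∈ Ioc a b)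
    (hfx : f a ≠ f x) : ∃ c ∈ Ioo a b, f' c ≠ 0 := by
  have hsub : Icc a x ⊆ Icc a b := Icc_subset_Icc_right hx.2
  obtain ⟨c, hc, hslope⟩ := exists_hasDerivAt_eq_slope f f' hx.1
    (fun y hy => (hf y (hsub hy)).continuousWithinAt.mono hsub)
    (fun y hy => (hf y (hsub (Ioo_subset_Icc_self hy))).hasDerivAt
      (Icc_mem_nhds hy.1 (hy.2.trans_le hx.2)))
  refine ⟨c, ⟨hc.1, hc.2.trans_le hx.2⟩, ?_⟩
  rw [hslope]
  exact div_ne_zero (sub_ne_zero.2 hfx.symm) (sub_ne_zero.2 hx.1.ne')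

lemma integral_div_eq_zero_of_hasDerivWithinAt_sub_one_sq {ρ w' : ℝ → ℝ} {a b : ℝ} (hab : a ≤ b)
    (hρ : ∀ x ∈ Icc a b, 1 ≤ ρ x)
    (hw : ∀ x ∈ Icc a b, HasDerivWithinAt (fun y => (ρ y - 1) ^ 2) (w' x) (Icc a b) x)
    (hw' : ContinuousOn w' (Icc a b)) (hρab : ρ a = ρ b) :
    ∫ x in a..b, w' x / ρ x = 0 := by
  set φ : ℝ → ℝ := fun y => (ρ y - 1) ^ 2
  set g : ℝ → ℝ := fun u => 1 / (1 + √u)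
  have huIcc : uIcc a b = Icc a b := uIcc_of_le hab
  have hinv : EqOn (fun x => w' x / ρ x) (fun x => (g ∘ φ) x * w' x) (uIcc a b) := by
    intro x hx
    rw [huIcc] at hx
    have hsqrt : √((ρ x - 1) ^ 2) = ρ x - 1 := Real.sqrt_sq (by linarith [hρ x hx])
    simp only [g, φ, Function.comp_apply, hsqrt, add_sub_cancel]
    ring
  have hg : Continuous g := continuous_const.div (by fun_prop) fun u => by positivity
  have hφ : ContinuousOn φ (uIcc a b) := huIcc ▸ fun x hx => (hw x hx).continuousWithinAt
  have hφ' : ∀ x ∈ Ioo (min a b) (max a b), HasDerivWithinAt φ (w' x) (Ioi x) x := by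
    rw [min_eq_left hab, max_eq_right hab]
    exact fun x hx =>
      ((hw x (Ioo_subset_Icc_self hx)).hasDerivAt (Icc_mem_nhds hx.1 hx.2)).hasDerivWithinAt
  calc ∫ x in a..b, w' x / ρ x
      = ∫ x in a..b, (g ∘ φ) x * w' x := integral_congr hinv
    _ = ∫ u in φ a..φ b, g u := integral_comp_mul_deriv'' hφ hφ' (huIcc ▸ hw') hg.continuousOn
    _ = 0 := by simp only [φ, hρab, integral_same]

theorem stmt_10_general (τ bbar : ℝ) (hbbar : bbar ≤ 1)
    (b ρ w' : ℝ → ℝ)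
    (hb : ∀ᵐ x ∂MeasureTheory.volume, x ∈ Set.Ioo (0:ℝ) 1 → 0 < b x ∧ b x ≤ bbar)
    (hρc : ContinuousOn ρ (Set.Icc (0:ℝ) 1))
    (hρge : ∀ x ∈ Set.Icc (0:ℝ) 1, 1 ≤ ρ x)
    (hρ0 : ρ 0 = 1) (hρ1 : ρ 1 = 1)
    (hw : ∀ x ∈ Set.Icc (0:ℝ) 1,
      HasDerivWithinAt (fun y => (ρ y - 1)^2) (w' x) (Set.Icc (0:ℝ) 1) x)
    (hw'c : ContinuousOn w' (Set.Icc (0:ℝ) 1))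
    (hweak : ∀ φ φ' : ℝ → ℝ,
      (∀ x ∈ Set.Icc (0:ℝ) 1, HasDerivWithinAt φ (φ' x) (Set.Icc (0:ℝ) 1) x) →
      ContinuousOn φ' (Set.Icc (0:ℝ) 1) → φ 0 = 0 → φ 1 = 0 →
      (1/2) * (∫ x in (0:ℝ)..1, ((ρ x + 1)/(ρ x)^3) * w' x * φ' x)
        + (1/τ) * (∫ x in (0:ℝ)..1, φ' x / ρ x)
        + (∫ x in (0:ℝ)..1, (ρ x - b x) * φ x) = 0)
    (hsub : ∃ x ∈ Set.Ioo (0:ℝ) 1, 1 < ρ x) :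
    False := by
  obtain ⟨x₀, hx₀, hρx₀⟩ := hsub
  have hweak := hweak (fun y => (ρ y - 1) ^ 2) w' hw hw'c (by simp [hρ0]) (by simp [hρ1])
  have hτ_term : ∫ x in (0:ℝ)..1, w' x / ρ x = 0 :=
    integral_div_eq_zero_of_hasDerivWithinAt_sub_one_sq zero_le_one hρge hw hw'c (hρ0.trans hρ1.symm)
  have hsource : 0 ≤ ∫ x in (0:ℝ)..1, (ρ x - b x) * (ρ x - 1) ^ 2 := by
    rw [integral_of_le zero_le_one, integral_Ioc_eq_integral_Ioo]
    refine integral_nonneg_of_ae ((ae_restrict_iff' measurableSet_Ioo).2 ?_)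
    filter_upwards [hb] with x hbx hx
    have := hρge x (Ioo_subset_Icc_self hx)
    exact mul_nonneg (by linarith [(hbx hx).2]) (sq_nonneg _)
  obtain ⟨c, hc, hw'_ne⟩ : ∃ c ∈ Ioo (0:ℝ) 1, w' c ≠ 0 :=
    exists_mem_Ioo_hasDerivWithinAt_ne_zero hw ⟨hx₀.1, hx₀.2.le⟩
      (by simp only [hρ0, sub_self]; nlinarith)
  have hpos : 0 < ∫ x in (0:ℝ)..1, (ρ x + 1) / ρ x ^ 3 * w' x * w' x := by
    refine intervalIntegral_pos_of_continuousOn_of_nonneg ?_ (fun x hx => ?_) hc ?_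
    · exact (((hρc.add continuousOn_const).div (hρc.pow 3)
        fun x hx => pow_ne_zero 3 (by linarith [hρge x hx])).mul hw'c).mul hw'c
    · have := hρge x hx
      rw [mul_assoc]
      exact mul_nonneg (div_nonneg (by linarith) (by positivity)) (mul_self_nonneg _)
    · have := hρge c (Ioo_subset_Icc_self hc)
      rw [mul_assoc]
      exact mul_pos (div_pos (by linarith) (by positivity)) (mul_self_pos.2 hw'_ne)
  rw [hτ_term, mul_zero, add_zero] at hweak
  linarith

/-- Non-existence of interior subsonic solutions for a supersonic doping profile:
if `0 < b ≤ b̄ ≤ 1` a.e. on `(0,1)`, there is no weak solution `ρ` of the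
degenerate equation `[((1/ρ) - 1/ρ³)ρ_x]_x + (1/τ)(1/ρ)_x - (ρ - b) = 0` with
sonic boundary `ρ(0) = ρ(1) = 1`, `ρ ≥ 1` on `[0,1]`, `(ρ-1)² ∈ H¹₀(0,1)`, and
`ρ > 1` somewhere in `(0,1)`. -/
theorem stmt_10 (τ bbar : ℝ) (hτ : 0 < τ) (hbbar : bbar ≤ 1)
    (b ρ w' : ℝ → ℝ)
    (hb : ∀ᵐ x ∂MeasureTheory.volume, x ∈ Set.Ioo (0:ℝ) 1 → 0 < b x ∧ b x ≤ bbar)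
    (hbmeas : Measurable b)
    (hρc : ContinuousOn ρ (Set.Icc (0:ℝ) 1))
    (hρge : ∀ x ∈ Set.Icc (0:ℝ) 1, 1 ≤ ρ x)
    (hρ0 : ρ 0 = 1) (hρ1 : ρ 1 = 1)
    (hw : ∀ x ∈ Set.Icc (0:ℝ) 1,
      HasDerivWithinAt (fun y => (ρ y - 1)^2) (w' x) (Set.Icc (0:ℝ) 1) x)
    (hw'c : ContinuousOn w' (Set.Icc (0:ℝ) 1))
    (hweak : ∀ φ φ' : ℝ → ℝ,
      (∀ x ∈ Set.Icc (0:ℝ) 1, HasDerivWithinAt φ (φ' x) (Set.Icc (0:ℝ) 1) x) →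
      ContinuousOn φ' (Set.Icc (0:ℝ) 1) → φ 0 = 0 → φ 1 = 0 →
      (1/2) * (∫ x in (0:ℝ)..1, ((ρ x + 1)/(ρ x)^3) * w' x * φ' x)
        + (1/τ) * (∫ x in (0:ℝ)..1, φ' x / ρ x)
        + (∫ x in (0:ℝ)..1, (ρ x - b x) * φ x) = 0)
    (hsub : ∃ x ∈ Set.Ioo (0:ℝ) 1, 1 < ρ x) :
    False :=
  stmt_10_general τ bbar hbbar b ρ w' hb hρc hρge hρ0 hρ1 hw hw'c hweak hsub
end

section
/- Let b > 1, τ > 0, and set k = τ(b-1), m = -(b-1)n, ℓ = 2τ(b-1)²n² (the leading-order coefficients in n of the cubic H₂). With p = -k²/3 + m and q = 2(k/3)³ - km/3 + ℓ, the discriminant expression (q/2)² + (p/3)³ equals (1/(4·3⁴))·[3(b-1)⁴τ²(8τ²(b-1) - 1)n² + O(n³)] as n → 0⁺; in particular, if τ < 1/(4√(b-1)) then (q/2)² + (p/3)³ < 0 for all sufficiently small n > 0, hence the cubic F³ + kF² + mF + ℓ = 0 has three real roots. -/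
lemma cubic_three_roots (k m l : ℝ)
    (h : ((2*(k/3)^3 - k*m/3 + l)/2)^2 + ((-k^2/3 + m)/3)^3 < 0) :
    ∃ x₁ x₂ x₃ : ℝ, ∀ x : ℝ,
      x^3 + k*x^2 + m*x + l = (x - x₁)*(x - x₂)*(x - x₃) := by
  obtain ⟨p, hp_def⟩ : ∃ p : ℝ, p = m - k^2/3 := ⟨_, rfl⟩
  obtain ⟨q, hq_def⟩ : ∃ q : ℝ, q = 2*k^3/27 - k*m/3 + l := ⟨_, rfl⟩
  have h' : (q/2)^2 + (p/3)^3 < 0 := by rw [hp_def, hq_def]; nlinarith [h]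
  have hp : p < 0 := by
    by_contra h0
    push_neg at h0
    have h1 : (0:ℝ) ≤ (p/3)^3 := by positivity
    nlinarith [sq_nonneg (q/2)]
  set s : ℝ := Real.sqrt (-p/3) with hs_def
  have hs : 0 < s := Real.sqrt_pos.2 (by linarith)
  have hs2 : s^2 = -p/3 := Real.sq_sqrt (by linarith)
  set f : ℝ → ℝ := fun t => t^3 + p*t + q with hf_def
  have hfs : f s = q - 2*s^3 := by
    simp only [hf_def]; linear_combination (3*s)*hs2
  have hfms : f (-s) = q + 2*s^3 := by
    simp only [hf_def]; linear_combination (-3*s)*hs2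
  have hprod : (q - 2*s^3)*(q + 2*s^3) < 0 := by
    have key : (q - 2*s^3)*(q + 2*s^3) = 4*((q/2)^2 + (p/3)^3) := by
      linear_combination (-4*(s^4 - s^2*p/3 + p^2/9)) * hs2
    rw [key]; linarith
  have hs3 : 0 < s^3 := by positivity
  obtain ⟨hq1, hq2⟩ : q - 2*s^3 < 0 ∧ 0 < q + 2*s^3 := by
    rcases mul_neg_iff.mp hprod with ⟨h1', h2'⟩ | ⟨h1', h2'⟩
    · linarith
    · exact ⟨h1', h2'⟩
  have hfs_neg : f s < 0 := by rw [hfs]; exact hq1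
  have hfms_pos : 0 < f (-s) := by rw [hfms]; exact hq2
  have hc : Continuous f := by rw [hf_def]; fun_prop
  obtain ⟨B, hB_def⟩ : ∃ B : ℝ, B = 1 + |p| + |q| + s := ⟨_, rfl⟩
  have hap : (0:ℝ) ≤ |p| := abs_nonneg p
  have haq : (0:ℝ) ≤ |q| := abs_nonneg q
  have h1B : 1 ≤ B := by rw [hB_def]; linarith
  have hBpos : 0 < B := by linarith
  have hsB : s ≤ B := by rw [hB_def]; linarith
  have t1 : B*(1+|p|+|q|) ≤ B*B := by
    have h0 : 1+|p|+|q| ≤ B := by rw [hB_def]; linarith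
    exact mul_le_mul_of_nonneg_left h0 hBpos.le
  have t2 : B*B ≤ B*B*B := by
    have h0 : B*B*1 ≤ B*B*B := mul_le_mul_of_nonneg_left h1B (by positivity)
    linarith only [h0]
  have t3 : (-|p|)*B ≤ p*B := mul_le_mul_of_nonneg_right (neg_abs_le p) hBpos.le
  have t3' : (-p)*B ≤ |p| * B := mul_le_mul_of_nonneg_right (neg_le_abs p) hBpos.le
  have t4 : |q| ≤ |q| * B := by
    have h0 : |q| * 1 ≤ |q| * B := mul_le_mul_of_nonneg_left h1B haq
    linarith only [h0]
  have hfB : 0 < f B := by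
    have : f B = B^3 + p*B + q := rfl
    rw [this]
    linarith only [t1, t2, t3, t4, neg_abs_le q, h1B]
  have hfmB : f (-B) < 0 := by
    have : f (-B) = -(B^3) - p*B + q := by simp only [hf_def]; ring
    rw [this]
    linarith only [t1, t2, t3', t4, le_abs_self q, h1B]
  -- three roots by IVT
  obtain ⟨t₁, ht₁m, ht₁⟩ : ∃ t ∈ Set.Icc (-B) (-s), f t = 0 := by
    have hmem : (0:ℝ) ∈ Set.Icc (f (-B)) (f (-s)) := ⟨hfmB.le, hfms_pos.le⟩
    obtain ⟨t, htm, ht⟩ := intermediate_value_Icc (by linarith : -B ≤ -s) hc.continuousOn hmem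
    exact ⟨t, htm, ht⟩
  obtain ⟨t₂, ht₂m, ht₂⟩ : ∃ t ∈ Set.Icc (-s) s, f t = 0 := by
    have hmem : (0:ℝ) ∈ Set.Icc (f s) (f (-s)) := ⟨hfs_neg.le, hfms_pos.le⟩
    obtain ⟨t, htm, ht⟩ := intermediate_value_Icc' (by linarith : -s ≤ s) hc.continuousOn hmem
    exact ⟨t, htm, ht⟩
  obtain ⟨t₃, ht₃m, ht₃⟩ : ∃ t ∈ Set.Icc s B, f t = 0 := by
    have hmem : (0:ℝ) ∈ Set.Icc (f s) (f B) := ⟨hfs_neg.le, hfB.le⟩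
    obtain ⟨t, htm, ht⟩ := intermediate_value_Icc hsB hc.continuousOn hmem
    exact ⟨t, htm, ht⟩
  -- distinctness
  have ht₁lt : t₁ < -s := lt_of_le_of_ne ht₁m.2 (fun he => by rw [he] at ht₁; linarith)
  have ht₂gt : -s < t₂ := lt_of_le_of_ne ht₂m.1 (fun he => by rw [← he] at ht₂; linarith)
  have ht₂lt : t₂ < s := lt_of_le_of_ne ht₂m.2 (fun he => by rw [he] at ht₂; linarith)
  have ht₃gt : s < t₃ := lt_of_le_of_ne ht₃m.1 (fun he => by rw [← he] at ht₃; linarith)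
  -- back-substitute x = t - k/3
  obtain ⟨x₁, hx1⟩ : ∃ x : ℝ, x = t₁ - k/3 := ⟨_, rfl⟩
  obtain ⟨x₂, hx2⟩ : ∃ x : ℝ, x = t₂ - k/3 := ⟨_, rfl⟩
  obtain ⟨x₃, hx3⟩ : ∃ x : ℝ, x = t₃ - k/3 := ⟨_, rfl⟩
  have hroot : ∀ t : ℝ, f t = 0 → (t - k/3)^3 + k*(t - k/3)^2 + m*(t - k/3) + l = 0 := by
    intro t ht
    have hft : f t = t^3 + p*t + q := rfl
    rw [hft, hp_def, hq_def] at ht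
    linear_combination ht
  have h1 : x₁^3 + k*x₁^2 + m*x₁ + l = 0 := by rw [hx1]; exact hroot t₁ ht₁
  have h2 : x₂^3 + k*x₂^2 + m*x₂ + l = 0 := by rw [hx2]; exact hroot t₂ ht₂
  have h3 : x₃^3 + k*x₃^2 + m*x₃ + l = 0 := by rw [hx3]; exact hroot t₃ ht₃
  have hx12 : x₁ - x₂ ≠ 0 := by rw [hx1, hx2]; intro he; linarith only [he, ht₁lt, ht₂gt]
  have hx23 : x₂ - x₃ ≠ 0 := by rw [hx2, hx3]; intro he; linarith only [he, ht₂lt, ht₃gt]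
  have hx13 : x₁ - x₃ ≠ 0 := by rw [hx1, hx3]; intro he; linarith only [he, ht₁lt, ht₃gt, hs]
  -- Vieta: coefficients are determined by three distinct roots
  have e1 : (k + (x₁+x₂+x₃))*x₁^2 + (m - (x₁*x₂+x₁*x₃+x₂*x₃))*x₁ + (l + x₁*x₂*x₃) = 0 := by
    linear_combination h1
  have e2 : (k + (x₁+x₂+x₃))*x₂^2 + (m - (x₁*x₂+x₁*x₃+x₂*x₃))*x₂ + (l + x₁*x₂*x₃) = 0 := by
    linear_combination h2
  have e3 : (k + (x₁+x₂+x₃))*x₃^2 + (m - (x₁*x₂+x₁*x₃+x₂*x₃))*x₃ + (l + x₁*x₂*x₃) = 0 := by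
    linear_combination h3
  have g12 : (k + (x₁+x₂+x₃))*(x₁+x₂) + (m - (x₁*x₂+x₁*x₃+x₂*x₃)) = 0 := by
    have hz : (x₁ - x₂) * ((k + (x₁+x₂+x₃))*(x₁+x₂) + (m - (x₁*x₂+x₁*x₃+x₂*x₃))) = 0 := by
      linear_combination e1 - e2
    exact (mul_eq_zero.mp hz).resolve_left hx12
  have g23 : (k + (x₁+x₂+x₃))*(x₂+x₃) + (m - (x₁*x₂+x₁*x₃+x₂*x₃)) = 0 := by
    have hz : (x₂ - x₃) * ((k + (x₁+x₂+x₃))*(x₂+x₃) + (m - (x₁*x₂+x₁*x₃+x₂*x₃))) = 0 := by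
      linear_combination e2 - e3
    exact (mul_eq_zero.mp hz).resolve_left hx23
  have hA : k + (x₁+x₂+x₃) = 0 := by
    have hz : (x₁ - x₃) * (k + (x₁+x₂+x₃)) = 0 := by linear_combination g12 - g23
    exact (mul_eq_zero.mp hz).resolve_left hx13
  have hBc : m - (x₁*x₂+x₁*x₃+x₂*x₃) = 0 := by linear_combination g12 - (x₁+x₂)*hA
  have hC : l + x₁*x₂*x₃ = 0 := by linear_combination e1 - x₁^2*hA - x₁*hBc
  exact ⟨x₁, x₂, x₃, fun x => by linear_combination x^2*hA + x*hBc + hC⟩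


/-- Cardano discriminant analysis: with `k = τ(b-1)`, `m = -(b-1)n`,
`ℓ = 2τ(b-1)²n²`, `p = -k²/3 + m`, `q = 2(k/3)³ - km/3 + ℓ`, the expression
`(q/2)² + (p/3)³` equals `(1/(4·3⁴))·3(b-1)⁴τ²(8τ²(b-1)-1)n² + O(n³)` as
`n → 0⁺`; in particular, if `τ < 1/(4√(b-1))` then `(q/2)² + (p/3)³ < 0` for all
sufficiently small `n > 0`, hence the cubic `F³ + kF² + mF + ℓ = 0` has three
real roots. -/
theorem stmt_14 (b τ : ℝ) (hb : 1 < b) (hτ : 0 < τ) :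
    let k : ℝ := τ*(b-1)
    let m : ℝ → ℝ := fun n => -(b-1)*n
    let l : ℝ → ℝ := fun n => 2*τ*(b-1)^2*n^2
    let p : ℝ → ℝ := fun n => -k^2/3 + m n
    let q : ℝ → ℝ := fun n => 2*(k/3)^3 - k*(m n)/3 + l n
    (∃ C > (0:ℝ), ∃ n₀ > (0:ℝ), ∀ n ∈ Set.Ioo (0:ℝ) n₀,
      |(q n/2)^2 + (p n/3)^3
        - (1/(4*3^4)) * (3*(b-1)^4*τ^2*(8*τ^2*(b-1) - 1)) * n^2| ≤ C * n^3) ∧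
    (τ < 1/(4*Real.sqrt (b-1)) →
      ∃ n₁ > (0:ℝ), ∀ n ∈ Set.Ioo (0:ℝ) n₁,
        (q n/2)^2 + (p n/3)^3 < 0 ∧
        ∃ x₁ x₂ x₃ : ℝ, ∀ x : ℝ,
          x^3 + k*x^2 + (m n)*x + l n = (x - x₁)*(x - x₂)*(x - x₃)) := by
  intro k m l p q
  simp only [show q = fun n => 2*(k/3)^3 - k*(m n)/3 + l n from rfl,
    show p = fun n => -k^2/3 + m n from rfl,
    show k = τ*(b-1) from rfl, show m = fun n => -(b-1)*n from rfl,
    show l = fun n => 2*τ*(b-1)^2*n^2 from rfl]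
  clear_value k m l p q
  clear k m l p q
  have hb1 : (0:ℝ) < b - 1 := by linarith
  obtain ⟨A, hA_def⟩ : ∃ A : ℝ, A = τ^2*(b-1)^4/3 - (b-1)^3/27 := ⟨_, rfl⟩
  obtain ⟨D, hD_def⟩ : ∃ D : ℝ, D = τ^2*(b-1)^4 := ⟨_, rfl⟩
  obtain ⟨M, hM_def⟩ : ∃ M : ℝ, M = (1/(4*3^4)) * (3*(b-1)^4*τ^2*(8*τ^2*(b-1) - 1)) := ⟨_, rfl⟩
  have key : ∀ n : ℝ, ((2*(τ*(b-1)/3)^3 - τ*(b-1)*(-(b-1)*n)/3 + 2*τ*(b-1)^2*n^2)/2)^2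
      + ((-(τ*(b-1))^2/3 + -(b-1)*n)/3)^3 - M * n^2 = A*n^3 + D*n^4 := by
    intro n
    rw [hA_def, hD_def, hM_def]
    ring
  constructor
  · refine ⟨|A| + |D| + 1, by positivity, 1, one_pos, ?_⟩
    rintro n ⟨hn0, hn1⟩
    rw [← hM_def]
    rw [show ((2*(τ*(b-1)/3)^3 - τ*(b-1)*(-(b-1)*n)/3 + 2*τ*(b-1)^2*n^2)/2)^2
      + ((-(τ*(b-1))^2/3 + -(b-1)*n)/3)^3 - M * n^2 = A*n^3 + D*n^4 from key n]
    have h1 : |A*n^3 + D*n^4| ≤ |A| * n^3 + |D| * n^4 := by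
      calc |A*n^3 + D*n^4| ≤ |A*n^3| + |D*n^4| := abs_add_le _ _
        _ = |A| * n^3 + |D| * n^4 := by
            rw [abs_mul, abs_mul, abs_of_pos (by positivity : (0:ℝ) < n^3),
              abs_of_pos (by positivity : (0:ℝ) < n^4)]
    have h2 : |D| * n^4 ≤ |D| * n^3 := by
      have h3 : (0:ℝ) ≤ |D| * (n^3 - n^4) := by
        apply mul_nonneg (abs_nonneg D)
        nlinarith [pow_pos hn0 3]
      linarith only [h3]
    have h4 : (0:ℝ) < n^3 := by positivity
    linarith only [h1, h2, h4]
  · intro hτ'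
    have hsq : 0 < Real.sqrt (b-1) := Real.sqrt_pos.2 hb1
    have hu1 : τ * (4*Real.sqrt (b-1)) < 1 := by
      rw [lt_div_iff₀ (by positivity)] at hτ'
      linarith only [hτ']
    have hss : Real.sqrt (b-1)^2 = b-1 := Real.sq_sqrt hb1.le
    have h16 : 16*(τ^2*(b-1)) < 1 := by nlinarith [hu1, hss, mul_pos hτ hsq]
    have hneg : 8*(τ^2*(b-1)) - 1 < 0 := by linarith only [h16, mul_pos (mul_pos hτ hτ) hb1, sq_nonneg τ, mul_pos (pow_pos hτ 2) hb1]
    have hMneg : M < 0 := by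
      rw [hM_def]
      have hpos : 0 < (b-1)^4*τ^2 := by positivity
      nlinarith [hpos, hneg]
    obtain ⟨n₁, hn₁_def⟩ : ∃ x : ℝ, x = min 1 (-M/(|A| + |D| + 1)) := ⟨_, rfl⟩
    have hn₁pos : 0 < n₁ := by
      rw [hn₁_def]
      exact lt_min one_pos (div_pos (by linarith only [hMneg]) (by positivity))
    refine ⟨n₁, hn₁pos, ?_⟩
    rintro n ⟨hn0, hnlt⟩
    have hn1 : n < 1 := lt_of_lt_of_le hnlt (by rw [hn₁_def]; exact min_le_left _ _)
    have hn2 : n < -M/(|A| + |D| + 1) := lt_of_lt_of_le hnlt (by rw [hn₁_def]; exact min_le_right _ _)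
    have hz : n*(|A| + |D| + 1) < -M := by
      rw [lt_div_iff₀ (by positivity)] at hn2
      linarith only [hn2]
    have hAn : A*n ≤ |A| * n := mul_le_mul_of_nonneg_right (le_abs_self A) hn0.le
    have hDn : D*n^2 ≤ |D| * n^2 := mul_le_mul_of_nonneg_right (le_abs_self D) (by positivity)
    have hDn2 : |D| * n^2 ≤ |D| * n := by
      have h3 : (0:ℝ) ≤ |D| * (n - n^2) := mul_nonneg (abs_nonneg D) (by nlinarith)
      linarith only [h3]
    have hin : M + A*n + D*n^2 < 0 := by linarith only [hz, hAn, hDn, hDn2, hn0]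
    have hdisc : ((2*(τ*(b-1)/3)^3 - τ*(b-1)*(-(b-1)*n)/3 + 2*τ*(b-1)^2*n^2)/2)^2
        + ((-(τ*(b-1))^2/3 + -(b-1)*n)/3)^3 < 0 := by
      have hk := key n
      have h0 : n^2*(M + A*n + D*n^2) < 0 := mul_neg_of_pos_of_neg (pow_pos hn0 2) hin
      have h0' : M*n^2 + A*n^3 + D*n^4 < 0 := by linarith only [h0]
      linarith only [hk, h0']
    refine ⟨hdisc, ?_⟩
    apply cubic_three_roots (τ*(b-1)) (-(b-1)*n) (2*τ*(b-1)^2*n^2)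
    have heq : ((2*(τ*(b-1)/3)^3 - τ*(b-1)*(-(b-1)*n)/3 + 2*τ*(b-1)^2*n^2)/2)^2
        + ((-(τ*(b-1))^2/3 + -(b-1)*n)/3)^3 < 0 := hdisc
    linarith only [heq]
end

section
/- Let U, V ∈ C¹[0,1] with U ≥ 1 on [0,1], V > 0 on [0,1], V(0) ≤ 1, V(1) ≤ 1, and let 0 < j < 1. Suppose ∫₀¹ [((1/U) - j²/U³)U_x + j/(τU)]φ_x dx + ∫₀¹ (U - b)φ dx = 0 for all φ ∈ H¹₀(0,1), and ∫₀¹ [((1/V) - j²/V³)V_x + j/(τV)]φ_x dx + ∫₀¹ (V - b)φ dx ≤ 0 for all nonnegative φ ∈ H¹₀(0,1). Then U(x) ≥ V(x) for all x ∈ [0,1]. -/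
/-!
Suppose `V > U` somewhere and let `(a, c)` be a maximal interval on which this happens, so that
`U = V` at `a` and `c`. Testing both weak formulations with nonnegative plateau functions
supported in `[a, c]` shows that the flux difference `p = flux V - flux U` is nondecreasing on
`[a, c)`; at `a`, where `V - U` attains its minimum `0`, `p a = A (U a) * (V - U)' a ≥ 0`, with
`A z = diffusivity j z = 1/z - j²/z³ ≥ 0` for `z ≥ 1`. Since `ρ ↦ j / (τ ρ)` is decreasing, the
primitive `H = enthalpy j` of `A` satisfies `(H ∘ V - H ∘ U)' ≥ p ≥ 0` on `[a, c]`. So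
`H ∘ V - H ∘ U` is nondecreasing there and vanishes at `c`, whereas it is positive wherever
`V > U ≥ 1`, as `H` is strictly increasing on `[1, ∞)`.
-/

open Set Filter Topology MeasureTheory intervalIntegral Real

namespace Real.smoothTransition

lemma deriv_eq_zero_of_nonpos {x : ℝ} (hx : x ≤ 0) : deriv smoothTransition x = 0 :=
  IsLocalMin.deriv_eq_zero <| .of_forall fun y => by
    simpa only [zero_of_nonpos hx] using nonneg y

lemma deriv_eq_zero_of_one_le {x : ℝ} (hx : 1 ≤ x) : deriv smoothTransition x = 0 :=
  IsLocalMax.deriv_eq_zero <| .of_forall fun y => by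
    simpa only [one_of_one_le hx] using le_one y

lemma continuous_deriv : Continuous (deriv smoothTransition) :=
  smoothTransition.contDiff (n := 1).continuous_deriv le_rfl

end Real.smoothTransition

/-- For `δ > 0`, a continuous probability density supported in `[z, z + δ]`: a one-sided
mollifier at `z`. -/
noncomputable def stepKernel (z δ t : ℝ) : ℝ := deriv smoothTransition ((t - z) / δ) / δ

lemma smoothTransition_div_eq_zero {z δ t : ℝ} (hδ : 0 < δ) (ht : t ≤ z) :
    smoothTransition ((t - z) / δ) = 0 :=
  smoothTransition.zero_of_nonpos (div_nonpos_of_nonpos_of_nonneg (by linarith) hδ.le)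

lemma smoothTransition_div_eq_one {z δ t : ℝ} (hδ : 0 < δ) (ht : z + δ ≤ t) :
    smoothTransition ((t - z) / δ) = 1 :=
  smoothTransition.one_of_one_le ((one_le_div hδ).mpr (by linarith))

lemma hasDerivAt_smoothTransition_div (z δ t : ℝ) :
    HasDerivAt (fun t => smoothTransition ((t - z) / δ)) (stepKernel z δ t) t := by
  have := (smoothTransition.contDiff (n := 1).differentiable one_ne_zero _).hasDerivAt.comp t
    (((hasDerivAt_id t).sub_const z).div_const δ)
  simpa only [stepKernel, Function.comp_def, id, div_eq_mul_inv, one_mul] using this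

lemma continuous_stepKernel (z δ : ℝ) : Continuous (stepKernel z δ) := by
  unfold stepKernel; fun_prop (disch := exact smoothTransition.continuous_deriv)

lemma stepKernel_nonneg (z : ℝ) {δ : ℝ} (hδ : 0 < δ) (t : ℝ) : 0 ≤ stepKernel z δ t :=
  div_nonneg smoothTransition.monotone.deriv_nonneg hδ.le

lemma stepKernel_eq_zero_of_notMem {z δ t : ℝ} (hδ : 0 < δ) (ht : t ∉ Ioo z (z + δ)) :
    stepKernel z δ t = 0 := by
  rw [stepKernel, div_eq_zero_iff]
  left
  rcases not_and_or.mp ht with ht | ht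
  · exact smoothTransition.deriv_eq_zero_of_nonpos
      (div_nonpos_of_nonpos_of_nonneg (by linarith) hδ.le)
  · exact smoothTransition.deriv_eq_zero_of_one_le ((one_le_div hδ).mpr (by linarith))

lemma integral_stepKernel {α β z δ : ℝ} (hδ : 0 < δ) (hα : α ≤ z) (hβ : z + δ ≤ β) :
    ∫ t in α..β, stepKernel z δ t = 1 := by
  rw [integral_eq_sub_of_hasDerivAt (fun t _ => hasDerivAt_smoothTransition_div z δ t)
    ((continuous_stepKernel z δ).intervalIntegrable _ _), smoothTransition_div_eq_one hδ hβ,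
    smoothTransition_div_eq_zero hδ hα, sub_zero]

lemma tendsto_integral_mul_stepKernel {p : ℝ → ℝ} {α β z : ℝ} (hp : ContinuousOn p (Icc α β))
    (hz : z ∈ Ico α β) :
    Tendsto (fun δ => ∫ t in α..β, p t * stepKernel z δ t) (𝓝[>] 0) (𝓝 (p z)) := by
  rw [Metric.tendsto_nhdsWithin_nhds]
  intro ε hε
  obtain ⟨η, hη, hpη⟩ :=
    Metric.continuousWithinAt_iff.mp (hp z (Ico_subset_Icc_self hz)) (ε / 2) (half_pos hε)
  refine ⟨min η (β - z), lt_min hη (sub_pos.2 hz.2), fun δ hδ hδη => ?_⟩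
  rw [mem_Ioi] at hδ
  rw [Real.dist_eq, sub_zero, abs_of_pos hδ, lt_min_iff] at hδη
  have hαβ : α ≤ β := hz.1.trans hz.2.le
  have hk := (continuous_stepKernel z δ).intervalIntegrable (μ := volume) α β
  have hpk : IntervalIntegrable (fun t => p t * stepKernel z δ t) volume α β :=
    (hp.mul (continuous_stepKernel z δ).continuousOn).intervalIntegrable_of_Icc hαβ
  have hmass := integral_stepKernel hδ hz.1 (by linarith : z + δ ≤ β)
  have hdiff : (∫ t in α..β, p t * stepKernel z δ t) - p z =
      ∫ t in α..β, (p t - p z) * stepKernel z δ t := by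
    simp_rw [sub_mul]
    rw [integral_sub hpk (hk.const_mul _), intervalIntegral.integral_const_mul, hmass, mul_one]
  have hbound : ‖∫ t in α..β, (p t - p z) * stepKernel z δ t‖ ≤
      ∫ t in α..β, ε / 2 * stepKernel z δ t := by
    refine norm_integral_le_of_norm_le hαβ (.of_forall fun t ht => ?_) (hk.const_mul _)
    rw [norm_mul, Real.norm_of_nonneg (stepKernel_nonneg z hδ t)]
    by_cases htz : t ∈ Ioo z (z + δ)
    · refine mul_le_mul_of_nonneg_right (le_of_lt ?_) (stepKernel_nonneg z hδ t)
      refine hpη (Ioc_subset_Icc_self ht) ?_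
      rw [Real.dist_eq, abs_of_pos (sub_pos.2 htz.1)]
      linarith [htz.2]
    · simp [stepKernel_eq_zero_of_notMem hδ htz]
  rw [Real.dist_eq, hdiff, ← Real.norm_eq_abs]
  rw [intervalIntegral.integral_const_mul, hmass] at hbound
  linarith

lemma monotoneOn_of_integral_mul_stepKernel_sub_nonpos {p : ℝ → ℝ} {α β a c : ℝ}
    (hp : ContinuousOn p (Icc α β)) (hα : α ≤ a) (hβ : c ≤ β)
    (h : ∀ x y δ, a ≤ x → x < y → 0 < δ → y + δ ≤ c →
      ∫ t in α..β, p t * (stepKernel x δ t - stepKernel y δ t) ≤ 0) :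
    MonotoneOn p (Ico a c) := by
  intro x hx y hy hxy
  rcases hxy.eq_or_lt with rfl | hxy
  · rfl
  have hlim := (tendsto_integral_mul_stepKernel hp ⟨hα.trans hx.1, hx.2.trans_le hβ⟩).sub
    (tendsto_integral_mul_stepKernel hp ⟨hα.trans hy.1, hy.2.trans_le hβ⟩)
  refine sub_nonpos.1 (le_of_tendsto hlim ?_)
  filter_upwards [Ioo_mem_nhdsGT (sub_pos.2 hy.2)] with δ hδ
  have hαβ : α ≤ β := hα.trans (hx.1.trans (hx.2.le.trans hβ))
  have hpk : ∀ z, IntervalIntegrable (fun t => p t * stepKernel z δ t) volume α β := fun z =>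
    (hp.mul (continuous_stepKernel z δ).continuousOn).intervalIntegrable_of_Icc hαβ
  rw [← integral_sub (hpk x) (hpk y)]
  simp_rw [← mul_sub]
  exact h x y δ hx.1 hxy hδ.1 (by linarith [hδ.2])

noncomputable def plateau (x y δ t : ℝ) : ℝ :=
  smoothTransition ((t - x) / δ) - smoothTransition ((t - y) / δ)

lemma hasDerivAt_plateau (x y δ t : ℝ) :
    HasDerivAt (plateau x y δ) (stepKernel x δ t - stepKernel y δ t) t :=
  (hasDerivAt_smoothTransition_div x δ t).sub (hasDerivAt_smoothTransition_div y δ t)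

lemma plateau_nonneg {x y δ : ℝ} (hxy : x ≤ y) (hδ : 0 < δ) (t : ℝ) : 0 ≤ plateau x y δ t :=
  sub_nonneg.2 <| smoothTransition.monotone <| div_le_div_of_nonneg_right (by linarith) hδ.le

lemma plateau_eq_zero_of_notMem {x y δ t : ℝ} (hxy : x ≤ y) (hδ : 0 < δ)
    (ht : t ∉ Ioo x (y + δ)) : plateau x y δ t = 0 := by
  rcases not_and_or.mp ht with ht | ht
  · rw [plateau, smoothTransition_div_eq_zero hδ (by linarith),
      smoothTransition_div_eq_zero hδ (by linarith), sub_zero]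
  · rw [plateau, smoothTransition_div_eq_one hδ (by linarith),
      smoothTransition_div_eq_one hδ (by linarith), sub_self]

lemma exists_eq_zero_and_pos_on_Ioc {f : ℝ → ℝ} {α x₀ : ℝ} (hαx : α ≤ x₀)
    (hf : ContinuousOn f (Icc α x₀)) (hα : f α ≤ 0) (hx₀ : 0 < f x₀) :
    ∃ a ∈ Ico α x₀, f a = 0 ∧ ∀ t ∈ Ioc a x₀, 0 < f t := by
  obtain ⟨a, ⟨haI, hfa⟩, hmax⟩ :=
    (isCompact_Icc.of_isClosed_subset (hf.preimage_isClosed_of_isClosed isClosed_Icc isClosed_Iic)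
      inter_subset_left).exists_isGreatest ⟨α, ⟨le_rfl, hαx⟩, hα⟩
  have hpos : ∀ t ∈ Ioc a x₀, 0 < f t := fun t ht =>
    not_le.1 fun h => ht.1.not_ge (hmax ⟨⟨haI.1.trans ht.1.le, ht.2⟩, h⟩)
  have hax : a < x₀ := lt_of_le_of_ne haI.2 fun h => (h ▸ hfa : f x₀ ≤ 0).not_gt hx₀
  obtain ⟨b, hb, hfb⟩ :=
    intermediate_value_Icc haI.2 (hf.mono (Icc_subset_Icc_left haI.1)) ⟨hfa, hx₀.le⟩
  obtain rfl : b = a := le_antisymm (hmax ⟨⟨haI.1.trans hb.1, hb.2⟩, hfb.le⟩) hb.1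
  exact ⟨b, ⟨haI.1, hax⟩, hfb, hpos⟩

lemma exists_eq_zero_and_pos_on_Ico {f : ℝ → ℝ} {x₀ β : ℝ} (hxβ : x₀ ≤ β)
    (hf : ContinuousOn f (Icc x₀ β)) (hβ : f β ≤ 0) (hx₀ : 0 < f x₀) :
    ∃ c ∈ Ioc x₀ β, f c = 0 ∧ ∀ t ∈ Ico x₀ c, 0 < f t := by
  have hf' : ContinuousOn (fun t => f (-t)) (Icc (-β) (-x₀)) :=
    hf.comp continuousOn_neg fun t ht => ⟨le_neg.1 ht.2, neg_le.1 ht.1⟩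
  obtain ⟨a, ha, hfa, hpos⟩ := exists_eq_zero_and_pos_on_Ioc (neg_le_neg hxβ) hf'
    (by rwa [neg_neg]) (by rwa [neg_neg])
  refine ⟨-a, ⟨lt_neg.1 ha.2, neg_le.1 ha.1⟩, hfa, fun t ht => ?_⟩
  simpa using hpos (-t) ⟨lt_neg.1 ht.2, neg_le_neg ht.1⟩

lemma exists_zeros_around_of_pos {f : ℝ → ℝ} {α β x₀ : ℝ} (hf : ContinuousOn f (Icc α β))
    (hα : f α ≤ 0) (hβ : f β ≤ 0) (hx₀ : x₀ ∈ Icc α β) (hfx₀ : 0 < f x₀) :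
    ∃ a c, α ≤ a ∧ a < x₀ ∧ x₀ < c ∧ c ≤ β ∧ f a = 0 ∧ f c = 0 ∧ ∀ t ∈ Icc a c, 0 ≤ f t := by
  obtain ⟨a, ha, hfa, hposa⟩ := exists_eq_zero_and_pos_on_Ioc hx₀.1
    (hf.mono (Icc_subset_Icc_right hx₀.2)) hα hfx₀
  obtain ⟨c, hc, hfc, hposc⟩ := exists_eq_zero_and_pos_on_Ico hx₀.2
    (hf.mono (Icc_subset_Icc_left hx₀.1)) hβ hfx₀
  refine ⟨a, c, ha.1, ha.2, hc.1, hc.2, hfa, hfc, fun t ht => ?_⟩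
  rcases ht.1.eq_or_lt with rfl | hat
  · exact hfa.ge
  rcases le_or_gt t x₀ with htx | htx
  · exact (hposa t ⟨hat, htx⟩).le
  rcases ht.2.eq_or_lt with rfl | htc
  · exact hfc.ge
  · exact (hposc t ⟨htx.le, htc⟩).le

lemma integral_le_integral_add_of_nonneg {f g : ℝ → ℝ} {a b : ℝ} (hab : a ≤ b)
    (hg : IntervalIntegrable g volume a b) (hg₀ : ∀ t ∈ Icc a b, 0 ≤ g t) :
    ∫ t in a..b, f t ≤ ∫ t in a..b, (f t + g t) := by
  by_cases hf : IntervalIntegrable f volume a b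
  · rw [integral_add hf hg, le_add_iff_nonneg_right]
    exact integral_nonneg hab hg₀
  · have hfg : ¬IntervalIntegrable (fun t => f t + g t) volume a b := fun hfg =>
      hf <| by simpa using hfg.sub hg
    rw [integral_undef hf, integral_undef hfg]

lemma HasDerivWithinAt.nonneg_of_isMinOn_Icc {g : ℝ → ℝ} {g' a c : ℝ} (hac : a < c)
    (hg : HasDerivWithinAt g g' (Icc a c) a) (hmin : IsMinOn g (Icc a c) a) : 0 ≤ g' := by
  have hcone : c - a ∈ posTangentConeAt (Icc a c) a := sub_mem_posTangentConeAt_of_segment_subset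
    ((convex_Icc a c).segment_subset (left_mem_Icc.2 hac.le) (right_mem_Icc.2 hac.le))
  have := hmin.localize.hasFDerivWithinAt_nonneg hg.hasFDerivWithinAt hcone
  simp only [ContinuousLinearMap.toSpanSingleton_apply, smul_eq_mul] at this
  exact nonneg_of_mul_nonneg_right this (sub_pos.2 hac)

noncomputable def diffusivity (j z : ℝ) : ℝ := 1 / z - j ^ 2 / z ^ 3

noncomputable def enthalpy (j z : ℝ) : ℝ := Real.log z + j ^ 2 / (2 * z ^ 2)

noncomputable def flux (j τ : ℝ) (W W' : ℝ → ℝ) (t : ℝ) : ℝ :=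
  diffusivity j (W t) * W' t + j / (τ * W t)

lemma diffusivity_eq {z : ℝ} (j : ℝ) (hz : z ≠ 0) :
    diffusivity j z = (z ^ 2 - j ^ 2) / z ^ 3 := by
  rw [diffusivity]
  field_simp

lemma diffusivity_nonneg {j z : ℝ} (hz : 0 < z) (hj : j ^ 2 ≤ z ^ 2) : 0 ≤ diffusivity j z := by
  rw [diffusivity_eq j hz.ne']
  exact div_nonneg (sub_nonneg.2 hj) (by positivity)

lemma diffusivity_pos {j z : ℝ} (hz : 0 < z) (hj : j ^ 2 < z ^ 2) : 0 < diffusivity j z := by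
  rw [diffusivity_eq j hz.ne']
  exact div_pos (sub_pos.2 hj) (by positivity)

lemma hasDerivAt_enthalpy (j : ℝ) {z : ℝ} (hz : 0 < z) :
    HasDerivAt (enthalpy j) (diffusivity j z) z := by
  have h := (hasDerivAt_log hz.ne').add
    ((hasDerivAt_const z (j ^ 2)).div ((hasDerivAt_pow 2 z).const_mul 2) (by positivity))
  refine h.congr_deriv ?_
  rw [diffusivity]
  field_simp
  ring

lemma strictMonoOn_enthalpy {j r : ℝ} (hr : 0 < r) (hj : j ^ 2 ≤ r ^ 2) :
    StrictMonoOn (enthalpy j) (Ici r) := by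
  refine strictMonoOn_of_hasDerivWithinAt_pos (f' := diffusivity j) (convex_Ici r)
    (fun z hz => (hasDerivAt_enthalpy j (hr.trans_le hz)).continuousAt.continuousWithinAt)
    (fun z hz => ?_) (fun z hz => ?_) <;> rw [interior_Ici] at hz
  · exact (hasDerivAt_enthalpy j (hr.trans hz)).hasDerivWithinAt
  · exact diffusivity_pos (hr.trans hz) (hj.trans_lt (pow_lt_pow_left₀ hz hr.le two_ne_zero))

lemma continuousOn_flux {j τ : ℝ} {W W' : ℝ → ℝ} {s : Set ℝ} (hτ : τ ≠ 0)
    (hW : ContinuousOn W s) (hW' : ContinuousOn W' s) (hpos : ∀ t ∈ s, 0 < W t) :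
    ContinuousOn (flux j τ W W') s := by
  unfold flux diffusivity
  have hne : ∀ t ∈ s, W t ≠ 0 := fun t ht => (hpos t ht).ne'
  fun_prop (disch := first | exact hne | simp_all)

lemma flux_le_flux_of_isMinOn {j τ a c : ℝ} {U U' V V' : ℝ → ℝ} (hac : a < c)
    (hUa : 0 < U a) (hj : j ^ 2 ≤ U a ^ 2)
    (hUd : HasDerivWithinAt U (U' a) (Icc a c) a) (hVd : HasDerivWithinAt V (V' a) (Icc a c) a)
    (hUV : ∀ t ∈ Icc a c, U t ≤ V t) (hUVa : V a = U a) :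
    flux j τ U U' a ≤ flux j τ V V' a := by
  have hd : 0 ≤ V' a - U' a := (hVd.sub hUd).nonneg_of_isMinOn_Icc hac fun t ht => by
    simpa [hUVa] using hUV t ht
  have hsplit : flux j τ V V' a - flux j τ U U' a = diffusivity j (U a) * (V' a - U' a) := by
    simp only [flux, hUVa]
    ring
  have := mul_nonneg (diffusivity_nonneg hUa hj) hd
  linarith

lemma monotoneOn_sub_of_weak_super_sub {F G U V b : ℝ → ℝ} {α β a c : ℝ} (hα : α ≤ a)
    (hβ : c ≤ β) (hF : ContinuousOn F (Icc α β)) (hG : ContinuousOn G (Icc α β))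
    (hU : ContinuousOn U (Icc α β)) (hV : ContinuousOn V (Icc α β))
    (hUV : ∀ t ∈ Icc a c, U t ≤ V t)
    (hsuper : ∀ φ φ' : ℝ → ℝ, (∀ x ∈ Icc α β, HasDerivWithinAt φ (φ' x) (Icc α β) x) →
      ContinuousOn φ' (Icc α β) → φ α = 0 → φ β = 0 → (∀ x ∈ Icc α β, 0 ≤ φ x) →
      0 ≤ (∫ x in α..β, F x * φ' x) + ∫ x in α..β, (U x - b x) * φ x)
    (hsub : ∀ φ φ' : ℝ → ℝ, (∀ x ∈ Icc α β, HasDerivWithinAt φ (φ' x) (Icc α β) x) →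
      ContinuousOn φ' (Icc α β) → φ α = 0 → φ β = 0 → (∀ x ∈ Icc α β, 0 ≤ φ x) →
      (∫ x in α..β, G x * φ' x) + ∫ x in α..β, (V x - b x) * φ x ≤ 0) :
    MonotoneOn (fun t => G t - F t) (Ico a c) := by
  refine monotoneOn_of_integral_mul_stepKernel_sub_nonpos (hG.sub hF) hα hβ ?_
  intro x y δ hax hxy hδ hyc
  have hαβ : α ≤ β := hα.trans (hax.trans (hxy.le.trans (by linarith)))
  have hsupp : ∀ t ∉ Ioo x (y + δ), plateau x y δ t = 0 := fun t ht =>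
    plateau_eq_zero_of_notMem hxy.le hδ ht
  have hφ : ∀ t ∈ Icc α β, HasDerivWithinAt (plateau x y δ)
      (stepKernel x δ t - stepKernel y δ t) (Icc α β) t :=
    fun t _ => (hasDerivAt_plateau x y δ t).hasDerivWithinAt
  have hφc : ContinuousOn (plateau x y δ) (Icc α β) := fun t _ =>
    (hasDerivAt_plateau x y δ t).continuousAt.continuousWithinAt
  have hφ'c : ContinuousOn (fun t => stepKernel x δ t - stepKernel y δ t) (Icc α β) :=
    ((continuous_stepKernel x δ).sub (continuous_stepKernel y δ)).continuousOn
  have hφα := hsupp α fun h => by linarith [h.1]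
  have hφβ := hsupp β fun h => by linarith [h.2]
  have hφ₀ : ∀ t ∈ Icc α β, 0 ≤ plateau x y δ t := fun t _ => plateau_nonneg hxy.le hδ t
  have hreaction : ∫ t in α..β, (U t - b t) * plateau x y δ t ≤
      ∫ t in α..β, (V t - b t) * plateau x y δ t := by
    have hgap : ∀ t ∈ Icc α β, 0 ≤ (V t - U t) * plateau x y δ t := fun t _ => by
      by_cases ht : t ∈ Ioo x (y + δ)
      · exact mul_nonneg (sub_nonneg.2 (hUV t ⟨hax.trans ht.1.le, hyc.trans' ht.2.le⟩))
          (plateau_nonneg hxy.le hδ t)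
      · simp [hsupp t ht]
    have hle := integral_le_integral_add_of_nonneg (f := fun t => (U t - b t) * plateau x y δ t)
      (g := fun t => (V t - U t) * plateau x y δ t) hαβ
      (((hV.sub hU).mul hφc).intervalIntegrable_of_Icc hαβ) hgap
    simpa only [← add_mul, sub_add_sub_cancel'] using hle
  have hflux : ∫ t in α..β, (G t - F t) * (stepKernel x δ t - stepKernel y δ t) =
      (∫ t in α..β, G t * (stepKernel x δ t - stepKernel y δ t)) -
        ∫ t in α..β, F t * (stepKernel x δ t - stepKernel y δ t) := by
    simp_rw [sub_mul]
    exact integral_sub ((hG.mul hφ'c).intervalIntegrable_of_Icc hαβ)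
      ((hF.mul hφ'c).intervalIntegrable_of_Icc hαβ)
  have := hsuper _ _ hφ hφ'c hφα hφβ hφ₀
  have := hsub _ _ hφ hφ'c hφα hφβ hφ₀
  linarith

lemma monotoneOn_enthalpy_sub_enthalpy {j τ : ℝ} {U U' V V' : ℝ → ℝ} {s : Set ℝ}
    (hs : Convex ℝ s) (hτ : 0 < τ) (hj : 0 ≤ j)
    (hUd : ∀ t ∈ s, HasDerivWithinAt U (U' t) s t) (hVd : ∀ t ∈ s, HasDerivWithinAt V (V' t) s t)
    (hUpos : ∀ t ∈ s, 0 < U t) (hUV : ∀ t ∈ s, U t ≤ V t)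
    (hflux : ∀ t ∈ interior s, flux j τ U U' t ≤ flux j τ V V' t) :
    MonotoneOn (fun t => enthalpy j (V t) - enthalpy j (U t)) s := by
  have hw : ∀ t ∈ s, HasDerivWithinAt (fun t => enthalpy j (V t) - enthalpy j (U t))
      (diffusivity j (V t) * V' t - diffusivity j (U t) * U' t) s t := fun t ht =>
    ((hasDerivAt_enthalpy j ((hUpos t ht).trans_le (hUV t ht))).comp_hasDerivWithinAt t
      (hVd t ht)).sub ((hasDerivAt_enthalpy j (hUpos t ht)).comp_hasDerivWithinAt t (hUd t ht))
  refine monotoneOn_of_hasDerivWithinAt_nonneg hs (fun t ht => (hw t ht).continuousWithinAt)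
    (fun t ht => (hw t (interior_subset ht)).mono interior_subset) fun t ht => ?_
  have ht' := interior_subset ht
  have hdrift : j / (τ * V t) ≤ j / (τ * U t) :=
    div_le_div_of_nonneg_left hj (mul_pos hτ (hUpos t ht'))
      (mul_le_mul_of_nonneg_left (hUV t ht') hτ.le)
  have := hflux t ht
  rw [flux, flux] at this
  linarith

/-- Comparison principle for the approximate semiconductor equation with
current parameter `0 < j < 1`: if `U ∈ C¹[0,1]`, `U ≥ 1`, is a weak solution and
`V ∈ C¹[0,1]`, `V > 0`, `V(0) ≤ 1`, `V(1) ≤ 1`, is a weak subsolution, then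
`U ≥ V` on `[0,1]`. -/
theorem stmt_15 (τ j : ℝ) (hτ : 0 < τ) (hj0 : 0 < j) (hj1 : j < 1)
    (b U U' V V' : ℝ → ℝ)
    (hUdiff : ∀ x ∈ Set.Icc (0:ℝ) 1, HasDerivWithinAt U (U' x) (Set.Icc (0:ℝ) 1) x)
    (hU'c : ContinuousOn U' (Set.Icc (0:ℝ) 1))
    (hUge : ∀ x ∈ Set.Icc (0:ℝ) 1, 1 ≤ U x)
    (hVdiff : ∀ x ∈ Set.Icc (0:ℝ) 1, HasDerivWithinAt V (V' x) (Set.Icc (0:ℝ) 1) x)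
    (hV'c : ContinuousOn V' (Set.Icc (0:ℝ) 1))
    (hVpos : ∀ x ∈ Set.Icc (0:ℝ) 1, 0 < V x)
    (hV0 : V 0 ≤ 1) (hV1 : V 1 ≤ 1)
    (hUweak : ∀ φ φ' : ℝ → ℝ,
      (∀ x ∈ Set.Icc (0:ℝ) 1, HasDerivWithinAt φ (φ' x) (Set.Icc (0:ℝ) 1) x) →
      ContinuousOn φ' (Set.Icc (0:ℝ) 1) → φ 0 = 0 → φ 1 = 0 →
      (∫ x in (0:ℝ)..1, ((1/U x - j^2/(U x)^3)*U' x + j/(τ*U x)) * φ' x)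
        + (∫ x in (0:ℝ)..1, (U x - b x) * φ x) = 0)
    (hVweak : ∀ φ φ' : ℝ → ℝ,
      (∀ x ∈ Set.Icc (0:ℝ) 1, HasDerivWithinAt φ (φ' x) (Set.Icc (0:ℝ) 1) x) →
      ContinuousOn φ' (Set.Icc (0:ℝ) 1) → φ 0 = 0 → φ 1 = 0 →
      (∀ x ∈ Set.Icc (0:ℝ) 1, 0 ≤ φ x) →
      (∫ x in (0:ℝ)..1, ((1/V x - j^2/(V x)^3)*V' x + j/(τ*V x)) * φ' x)
        + (∫ x in (0:ℝ)..1, (V x - b x) * φ x) ≤ 0) :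
    ∀ x ∈ Set.Icc (0:ℝ) 1, V x ≤ U x := by
  by_contra! ⟨x₀, hx₀, hUVx₀⟩
  have hUc : ContinuousOn U (Icc 0 1) := fun t ht => (hUdiff t ht).continuousWithinAt
  have hVc : ContinuousOn V (Icc 0 1) := fun t ht => (hVdiff t ht).continuousWithinAt
  have hUpos : ∀ t ∈ Icc (0 : ℝ) 1, 0 < U t := fun t ht => one_pos.trans_le (hUge t ht)
  obtain ⟨a, c, ha, hax₀, hx₀c, hc, hUVa, hUVc, hUV⟩ :=
    exists_zeros_around_of_pos (f := fun t => V t - U t) (hVc.sub hUc)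
    (by linarith [hUge 0 (left_mem_Icc.2 zero_le_one)])
    (by linarith [hUge 1 (right_mem_Icc.2 zero_le_one)]) hx₀ (sub_pos.2 hUVx₀)
  replace hUV : ∀ t ∈ Icc a c, U t ≤ V t := fun t ht => sub_nonneg.1 (hUV t ht)
  have hac : Icc a c ⊆ Icc 0 1 := Icc_subset_Icc ha hc
  have ha : a ∈ Icc (0 : ℝ) 1 := hac (left_mem_Icc.2 (hax₀.trans hx₀c).le)
  have hj : j ^ 2 ≤ 1 ^ 2 := pow_le_pow_left₀ hj0.le hj1.le 2
  have hflux_a : flux j τ U U' a ≤ flux j τ V V' a := flux_le_flux_of_isMinOn (hax₀.trans hx₀c)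
    (hUpos a ha) (hj.trans (pow_le_pow_left₀ zero_le_one (hUge a ha) 2))
    ((hUdiff a ha).mono hac) ((hVdiff a ha).mono hac) hUV (sub_eq_zero.1 hUVa)
  have hmono := monotoneOn_sub_of_weak_super_sub ha.1 hc
    (continuousOn_flux (j := j) hτ.ne' hUc hU'c hUpos) (continuousOn_flux hτ.ne' hVc hV'c hVpos)
    hUc hVc hUV (fun φ φ' hφ hφ' hφ0 hφ1 _ => (hUweak φ φ' hφ hφ' hφ0 hφ1).ge) hVweak
  have hx₀c' : Icc x₀ c ⊆ Icc a c := Icc_subset_Icc_left hax₀.le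
  have hw := monotoneOn_enthalpy_sub_enthalpy (convex_Icc x₀ c) hτ hj0.le
    (fun t ht => (hUdiff t (hac (hx₀c' ht))).mono (hx₀c'.trans hac))
    (fun t ht => (hVdiff t (hac (hx₀c' ht))).mono (hx₀c'.trans hac))
    (fun t ht => hUpos t (hac (hx₀c' ht))) (fun t ht => hUV t (hx₀c' ht)) fun t ht => by
      rw [interior_Icc] at ht
      have := hmono ⟨le_rfl, hax₀.trans hx₀c⟩ ⟨(hax₀.trans ht.1).le, ht.2⟩ (hax₀.trans ht.1).le
      linarith
  have hwx₀c := hw (left_mem_Icc.2 hx₀c.le) (right_mem_Icc.2 hx₀c.le) hx₀c.le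
  have hwx₀ : enthalpy j (U x₀) < enthalpy j (V x₀) := strictMonoOn_enthalpy one_pos hj
    (hUge x₀ hx₀) ((hUge x₀ hx₀).trans hUVx₀.le) hUVx₀
  simp only [sub_eq_zero.1 hUVc, sub_self] at hwx₀c
  linarith
end

section
/- Let ρ ∈ C[0,1] ∩ C¹(0,1) with ρial ≥ 1 satisfy on [1-s,1]: c₁ ≤ -[((ρ-1)²)_x](x) ≤ c₂ for positive constants c₁ < c₂, and ρ(1) = 1. Then for x ∈ [1-s,1]: √(c₁(1-x)) ≤ ρ(x) - 1 ≤ √(c₂(1-x)), and -c₂/(2√(c₁(1-x))) ≤ ρ_x(x) ≤ -c₁/(2√(c₂(1-x))); in particular ρ_x(x) → -∞ as x → 1⁻ at the rate (1-x)^{-1/2}. -/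
/-!
The function `w = (ρ - 1)²` vanishes at `1` and `-w'` lies between `c₁` and `c₂`, so the mean
value inequality traps `w x` between `c₁ (1 - x)` and `c₂ (1 - x)`. Taking square roots bounds
`ρ - 1`, and dividing `w' = 2 (ρ - 1) ρ'` by these bounds gives the two-sided bound on `ρ'`,
whose upper bound tends to `-∞` like `(1 - x)^(-1/2)`.
-/

open Set Filter Topology

theorem mul_sub_le_and_le_mul_sub_of_neg_deriv_mem_Icc {f f' : ℝ → ℝ} {a b c₁ c₂ : ℝ}
    (hf : ContinuousOn f (Icc a b)) (hf' : ∀ x ∈ Ioo a b, HasDerivAt f (f' x) x)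
    (hbd : ∀ x ∈ Ioo a b, c₁ ≤ -f' x ∧ -f' x ≤ c₂) (hb : f b = 0) {x : ℝ}
    (hx : x ∈ Icc a b) :
    c₁ * (b - x) ≤ f x ∧ f x ≤ c₂ * (b - x) := by
  have hbI : b ∈ Icc a b := ⟨hx.1.trans hx.2, le_rfl⟩
  have hdiff : DifferentiableOn ℝ f (interior (Icc a b)) := fun y hy =>
    (hf' y (by rwa [interior_Icc] at hy)).differentiableAt.differentiableWithinAt
  have hderiv : ∀ y ∈ interior (Icc a b), c₁ ≤ -deriv f y ∧ -deriv f y ≤ c₂ :=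
    fun y hy => by
      rw [interior_Icc] at hy
      rw [(hf' y hy).deriv]
      exact hbd y hy
  have hlow := (convex_Icc a b).image_sub_le_mul_sub_of_deriv_le hf hdiff
    (fun y hy => le_neg.mp (hderiv y hy).1) x hx b hbI hx.2
  have hupp := (convex_Icc a b).mul_sub_le_image_sub_of_le_deriv hf hdiff
    (fun y hy => neg_le.mp (hderiv y hy).2) x hx b hbI hx.2
  constructor <;> linarith

theorem sqrt_mul_le_and_le_sqrt_mul_of_sq_bounds {r c₁ c₂ t : ℝ} (hr : 0 ≤ r)
    (h : c₁ * t ≤ r ^ 2 ∧ r ^ 2 ≤ c₂ * t) :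
    √(c₁ * t) ≤ r ∧ r ≤ √(c₂ * t) :=
  ⟨(Real.sqrt_le_sqrt h.1).trans_eq (Real.sqrt_sq hr), Real.le_sqrt_of_sq_le h.2⟩

theorem neg_div_le_and_le_neg_div_of_neg_two_mul_bounds {r p c₁ c₂ e₁ e₂ : ℝ}
    (hc₁ : 0 < c₁) (he₁ : 0 < e₁) (hr : e₁ ≤ r ∧ r ≤ e₂)
    (h : c₁ ≤ -(2 * r * p) ∧ -(2 * r * p) ≤ c₂) :
    -c₂ / (2 * e₁) ≤ p ∧ p ≤ -c₁ / (2 * e₂) := by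
  obtain ⟨hr₁, hr₂⟩ := hr
  have hp : p < 0 := by nlinarith
  constructor
  · rw [div_le_iff₀ (by positivity)]; nlinarith
  · rw [le_div_iff₀ (by linarith)]; nlinarith

theorem tendsto_neg_div_two_mul_sqrt_nhdsLT_atBot {c k b : ℝ} (hc : 0 < c) (hk : 0 < k) :
    Tendsto (fun x => -c / (2 * √(k * (b - x)))) (𝓝[<] b) atBot := by
  have h0 : Tendsto (fun x => 2 * √(k * (b - x))) (𝓝[<] b) (𝓝[>] 0) := by
    refine tendsto_nhdsWithin_iff.mpr ⟨?_, ?_⟩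
    · have : Continuous (fun x => 2 * √(k * (b - x))) := by fun_prop
      simpa using (this.tendsto b).mono_left nhdsWithin_le_nhds
    · filter_upwards [self_mem_nhdsWithin] with x (hx : x < b)
      have : 0 < k * (b - x) := mul_pos hk (sub_pos.mpr hx)
      exact mul_pos two_pos (Real.sqrt_pos.mpr this)
  refine (tendsto_neg_atTop_atBot.comp (h0.inv_tendsto_nhdsGT_zero.const_mul_atTop hc)).congr
    fun x => ?_
  simp only [Function.comp_apply, Pi.inv_apply, div_eq_mul_inv, neg_mul]

theorem stmt_17_general (s c₁ c₂ : ℝ) (hs0 : 0 < s)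
    (hc₁ : 0 < c₁) (hc : c₁ < c₂)
    (ρ ρ' : ℝ → ℝ)
    (hρc : ContinuousOn ρ (Set.Icc (1-s) 1))
    (hρge : ∀ x ∈ Set.Icc (1-s) 1, 1 ≤ ρ x)
    (hρ1 : ρ 1 = 1)
    (hdiff : ∀ x ∈ Set.Ico (1-s) 1, HasDerivAt ρ (ρ' x) x)
    (hbd : ∀ x ∈ Set.Ico (1-s) 1,
      c₁ ≤ -(2*(ρ x - 1)*ρ' x) ∧ -(2*(ρ x - 1)*ρ' x) ≤ c₂) :
    (∀ x ∈ Set.Icc (1-s) 1,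
      Real.sqrt (c₁*(1-x)) ≤ ρ x - 1 ∧ ρ x - 1 ≤ Real.sqrt (c₂*(1-x))) ∧
    (∀ x ∈ Set.Ico (1-s) 1,
      -c₂/(2*Real.sqrt (c₁*(1-x))) ≤ ρ' x ∧
      ρ' x ≤ -c₁/(2*Real.sqrt (c₂*(1-x)))) ∧
    Filter.Tendsto ρ' (nhdsWithin 1 (Set.Iio 1)) Filter.atBot := by
  have hsq (x) (hx : x ∈ Icc (1 - s) 1) :
      c₁ * (1 - x) ≤ (ρ x - 1) ^ 2 ∧ (ρ x - 1) ^ 2 ≤ c₂ * (1 - x) :=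
    mul_sub_le_and_le_mul_sub_of_neg_deriv_mem_Icc (f := fun y => (ρ y - 1) ^ 2)
      (f' := fun y => 2 * (ρ y - 1) * ρ' y)
      ((hρc.sub continuousOn_const).pow 2)
      (fun y hy => by simpa using ((hdiff y (Ioo_subset_Ico_self hy)).sub_const 1).fun_pow 2)
      (fun y hy => hbd y (Ioo_subset_Ico_self hy)) (by simp [hρ1]) hx
  have hsqrt (x) (hx : x ∈ Icc (1 - s) 1) :
      √(c₁ * (1 - x)) ≤ ρ x - 1 ∧ ρ x - 1 ≤ √(c₂ * (1 - x)) :=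
    sqrt_mul_le_and_le_sqrt_mul_of_sq_bounds (sub_nonneg.mpr (hρge x hx)) (hsq x hx)
  have hderiv (x) (hx : x ∈ Ico (1 - s) 1) :
      -c₂ / (2 * √(c₁ * (1 - x))) ≤ ρ' x ∧ ρ' x ≤ -c₁ / (2 * √(c₂ * (1 - x))) :=
    neg_div_le_and_le_neg_div_of_neg_two_mul_bounds hc₁
      (Real.sqrt_pos.mpr (mul_pos hc₁ (sub_pos.mpr hx.2))) (hsqrt x (Ico_subset_Icc_self hx))
      (hbd x hx)
  refine ⟨hsqrt, hderiv, tendsto_atBot_mono' _ ?_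
    (tendsto_neg_div_two_mul_sqrt_nhdsLT_atBot hc₁ (hc₁.trans hc))⟩
  filter_upwards [Ioo_mem_nhdsLT (by linarith : 1 - s < 1)] with x hx
  exact (hderiv x (Ioo_subset_Ico_self hx)).2

/-- Optimal `C^{1/2}` boundary behavior near the sonic endpoint `x = 1`: if
`ρ ≥ 1`, `ρ(1) = 1` and `c₁ ≤ -[((ρ-1)²)_x] ≤ c₂` on `[1-s,1)` with
`0 < c₁ < c₂`, then `√(c₁(1-x)) ≤ ρ(x)-1 ≤ √(c₂(1-x))` on `[1-s,1]`,
`-c₂/(2√(c₁(1-x))) ≤ ρ_x(x) ≤ -c₁/(2√(c₂(1-x)))` on `[1-s,1)`, and in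
particular `ρ_x(x) → -∞` as `x → 1⁻`. -/
theorem stmt_17 (s c₁ c₂ : ℝ) (hs0 : 0 < s) (hs1 : s < 1)
    (hc₁ : 0 < c₁) (hc : c₁ < c₂)
    (ρ ρ' : ℝ → ℝ)
    (hρc : ContinuousOn ρ (Set.Icc (1-s) 1))
    (hρge : ∀ x ∈ Set.Icc (1-s) 1, 1 ≤ ρ x)
    (hρ1 : ρ 1 = 1)
    (hdiff : ∀ x ∈ Set.Ico (1-s) 1, HasDerivAt ρ (ρ' x) x)
    (hbd : ∀ x ∈ Set.Ico (1-s) 1,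
      c₁ ≤ -(2*(ρ x - 1)*ρ' x) ∧ -(2*(ρ x - 1)*ρ' x) ≤ c₂) :
    (∀ x ∈ Set.Icc (1-s) 1,
      Real.sqrt (c₁*(1-x)) ≤ ρ x - 1 ∧ ρ x - 1 ≤ Real.sqrt (c₂*(1-x))) ∧
    (∀ x ∈ Set.Ico (1-s) 1,
      -c₂/(2*Real.sqrt (c₁*(1-x))) ≤ ρ' x ∧
      ρ' x ≤ -c₁/(2*Real.sqrt (c₂*(1-x)))) ∧
    Filter.Tendsto ρ' (nhdsWithin 1 (Set.Iio 1)) Filter.atBot :=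
  stmt_17_general s c₁ c₂ hs0 hc₁ hc ρ ρ' hρc hρge hρ1 hdiff hbd
end

section
/- Suppose 0 < b(x) ≤ b̄ for a.e. x with b̄(1 + √(2b̄)) < 1, and let u ∈ C¹[ŷ,1] with u ≥ 1, u(1) = 1, u_x(ŷ) = 0, 1 - ŷ ≤ 1, satisfying the energy identity ∫_ŷ^1 ((u+1)/(2u))|[(u-1)²]_x|² dx ≤ ∫_ŷ^1 (b - 1/u)(u-1)² dx. If additionally ∫_ŷ^1 (u-1)^4 ≤ ∫_ŷ^1 |[(u-1)²]_x|², then u ≡ 1 on [ŷ,1]. -/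
/-!
The energy inequality bounds `½ ∫ |[(u-1)²]_x|²` by `∫ (b - 1/u)(u-1)²`. Since `1/u ≥ 2 - u`,
the integrand is at most `(b̄ - ½)(u-1)² + ½(u-1)⁴`, and the Poincaré inequality lets the gradient
term on the left absorb the quartic one. What remains is `0 ≤ (b̄ - ½) ∫ (u-1)²`, while the
smallness condition on `b̄` forces `b̄ < ½`; so `∫ (u-1)² = 0` and, by continuity, `u ≡ 1`.
-/

open MeasureTheory Set

lemma lt_half_of_mul_one_add_sqrt_lt_one {β : ℝ} (h : β * (1 + √(2 * β)) < 1) : β < 1 / 2 := by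
  by_contra! hβ
  have : 1 ≤ √(2 * β) := Real.one_le_sqrt.mpr (by linarith)
  nlinarith

lemma two_sub_le_one_div {u : ℝ} (hu : 0 < u) : 2 - u ≤ 1 / u := by
  rw [le_div_iff₀ hu]
  nlinarith [sq_nonneg (u - 1)]

lemma half_le_add_one_div_two_mul {u : ℝ} (hu : 0 < u) : 1 / 2 ≤ (u + 1) / (2 * u) := by
  rw [div_le_div_iff₀ two_pos (by positivity)]
  linarith

lemma sub_one_div_mul_sq_le {w β u : ℝ} (hw : w ≤ β) (hu : 0 < u) :
    (w - 1 / u) * (u - 1) ^ 2 ≤ (β - 1 / 2) * (u - 1) ^ 2 + 1 / 2 * (u - 1) ^ 4 := by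
  have h₁ : (w - 1 / u) * (u - 1) ^ 2 ≤ (β - 2 + u) * (u - 1) ^ 2 :=
    mul_le_mul_of_nonneg_right (by linarith [two_sub_le_one_div hu]) (sq_nonneg _)
  nlinarith [sq_nonneg ((u - 1) * (u - 2))]

lemma eqOn_zero_of_integral_nonpos {f : ℝ → ℝ} {a b : ℝ} (hab : a < b)
    (hf : ContinuousOn f (Icc a b)) (hf0 : ∀ x ∈ Icc a b, 0 ≤ f x)
    (hint : ∫ x in a..b, f x ≤ 0) : EqOn f 0 (Icc a b) := by
  intro x hx
  by_contra hne
  have hpos := intervalIntegral.integral_lt_integral_of_continuousOn_of_le_of_exists_lt hab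
    continuousOn_const hf (fun y hy => hf0 y (Ioc_subset_Icc_self hy))
    ⟨x, hx, (hf0 x hx).lt_of_ne' hne⟩
  rw [intervalIntegral.integral_zero] at hpos
  linarith

section Energy

variable {a b : ℝ} {u : ℝ → ℝ}

lemma half_integral_sq_le_integral_weighted (hab : a ≤ b) (hu : ContinuousOn u (Icc a b))
    (hu0 : ∀ x ∈ Icc a b, 0 < u x) {g : ℝ → ℝ} (hg : ContinuousOn g (Icc a b)) :
    1 / 2 * ∫ x in a..b, g x ^ 2 ≤ ∫ x in a..b, (u x + 1) / (2 * u x) * g x ^ 2 := by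
  have hweight : ContinuousOn (fun x => (u x + 1) / (2 * u x)) (Icc a b) :=
    (hu.add continuousOn_const).div (continuousOn_const.mul hu)
      fun x hx => (mul_pos two_pos (hu0 x hx)).ne'
  rw [← intervalIntegral.integral_const_mul]
  refine intervalIntegral.integral_mono_on hab
    ((continuousOn_const.mul (hg.pow 2)).intervalIntegrable_of_Icc hab)
    ((hweight.mul (hg.pow 2)).intervalIntegrable_of_Icc hab) fun x hx => ?_
  exact mul_le_mul_of_nonneg_right (half_le_add_one_div_two_mul (hu0 x hx)) (sq_nonneg _)

lemma integral_sub_one_div_mul_sq_le (hab : a ≤ b) (hu : ContinuousOn u (Icc a b))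
    (hu0 : ∀ x ∈ Icc a b, 0 < u x) {w : ℝ → ℝ} {β : ℝ} (hw : IntegrableOn w (Icc a b))
    (hwβ : ∀ᵐ x, x ∈ Icc a b → w x ≤ β) :
    ∫ x in a..b, (w x - 1 / u x) * (u x - 1) ^ 2
      ≤ (β - 1 / 2) * (∫ x in a..b, (u x - 1) ^ 2) + 1 / 2 * ∫ x in a..b, (u x - 1) ^ 4 := by
  have hsq : ContinuousOn (fun x => (u x - 1) ^ 2) (Icc a b) := (hu.sub continuousOn_const).pow 2
  have hquart : IntervalIntegrable (fun x => (u x - 1) ^ 4) volume a b :=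
    ((hu.sub continuousOn_const).pow 4).intervalIntegrable_of_Icc hab
  have hsqi : IntervalIntegrable (fun x => (u x - 1) ^ 2) volume a b :=
    hsq.intervalIntegrable_of_Icc hab
  have hinv : IntegrableOn (fun x => 1 / u x) (Icc a b) :=
    (continuousOn_const.div hu fun x hx => (hu0 x hx).ne').integrableOn_Icc
  have hlhs : IntervalIntegrable (fun x => (w x - 1 / u x) * (u x - 1) ^ 2) volume a b :=
    (intervalIntegrable_iff_integrableOn_Icc_of_le hab).2
      ((hw.sub hinv).mul_continuousOn hsq isCompact_Icc)
  have hrhs := (hsqi.const_mul (β - 1 / 2)).add (hquart.const_mul (1 / 2))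
  rw [← intervalIntegral.integral_const_mul, ← intervalIntegral.integral_const_mul,
    ← intervalIntegral.integral_add (hsqi.const_mul _) (hquart.const_mul _)]
  refine intervalIntegral.integral_mono_ae_restrict hab hlhs hrhs ?_
  filter_upwards [ae_restrict_mem measurableSet_Icc, ae_restrict_of_ae hwβ] with x hx hwx
  exact sub_one_div_mul_sq_le (hwx hx) (hu0 x hx)

end Energy

theorem stmt_18_general (bbar yhat : ℝ) (hbbar : bbar*(1 + Real.sqrt (2*bbar)) < 1)
    (hy1 : yhat < 1)
    (b u u' : ℝ → ℝ)
    (hbmeas : Measurable b)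
    (hb : ∀ᵐ x ∂MeasureTheory.volume, x ∈ Set.Icc yhat 1 → 0 < b x ∧ b x ≤ bbar)
    (hdiff : ∀ x ∈ Set.Icc yhat 1, HasDerivWithinAt u (u' x) (Set.Icc yhat 1) x)
    (hu'c : ContinuousOn u' (Set.Icc yhat 1))
    (huge : ∀ x ∈ Set.Icc yhat 1, 1 ≤ u x)
    (henergy : (∫ x in yhat..1, ((u x + 1)/(2*u x)) * (2*(u x - 1)*u' x)^2)
      ≤ ∫ x in yhat..1, (b x - 1/u x) * (u x - 1)^2)
    (hpoincare : (∫ x in yhat..1, (u x - 1)^4)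
      ≤ ∫ x in yhat..1, (2*(u x - 1)*u' x)^2) :
    ∀ x ∈ Set.Icc yhat 1, u x = 1 := by
  have hβ : bbar < 1 / 2 := lt_half_of_mul_one_add_sqrt_lt_one hbbar
  have hu : ContinuousOn u (Icc yhat 1) := fun x hx => (hdiff x hx).continuousWithinAt
  have hu0 : ∀ x ∈ Icc yhat 1, 0 < u x := fun x hx => one_pos.trans_le (huge x hx)
  have hg : ContinuousOn (fun x => 2 * (u x - 1) * u' x) (Icc yhat 1) :=
    (continuousOn_const.mul (hu.sub continuousOn_const)).mul hu'c
  have hbint : IntegrableOn b (Icc yhat 1) :=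
    Measure.integrableOn_of_bounded measure_Icc_lt_top.ne hbmeas.aestronglyMeasurable
      ((ae_restrict_iff' measurableSet_Icc).2 <| hb.mono fun x hbx hx =>
        abs_le.2 ⟨by linarith [hbx hx], (hbx hx).2⟩)
  have hsq_nonpos : ∫ x in yhat..1, (u x - 1) ^ 2 ≤ 0 := by
    have := (half_integral_sq_le_integral_weighted hy1.le hu hu0 hg).trans <| henergy.trans <|
      integral_sub_one_div_mul_sq_le hy1.le hu hu0 hbint (hb.mono fun x hbx hx => (hbx hx).2)
    nlinarith
  intro x hx
  have := eqOn_zero_of_integral_nonpos hy1 ((hu.sub continuousOn_const).pow 2)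
    (fun _ _ => sq_nonneg _) hsq_nonpos hx
  simpa [sub_eq_zero] using this

/-- Non-existence of nontrivial interior supersonic profiles with small doping:
if `0 < b ≤ b̄` a.e. with `b̄(1+√(2b̄)) < 1`, and `u ∈ C¹[ŷ,1]`, `u ≥ 1`,
`u(1) = 1`, `u_x(ŷ) = 0`, `1 - ŷ ≤ 1`, satisfies the energy inequality
`∫_ŷ¹ ((u+1)/(2u))|[(u-1)²]_x|² ≤ ∫_ŷ¹ (b - 1/u)(u-1)²` together with the
Poincaré inequality `∫_ŷ¹ (u-1)⁴ ≤ ∫_ŷ¹ |[(u-1)²]_x|²`, then `u ≡ 1` on `[ŷ,1]`. -/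
theorem stmt_18 (bbar yhat : ℝ) (hbbar : bbar*(1 + Real.sqrt (2*bbar)) < 1)
    (hbbar0 : 0 < bbar) (hy0 : 0 ≤ yhat) (hy1 : yhat < 1)
    (b u u' : ℝ → ℝ)
    (hbmeas : Measurable b)
    (hb : ∀ᵐ x ∂MeasureTheory.volume, x ∈ Set.Icc yhat 1 → 0 < b x ∧ b x ≤ bbar)
    (hdiff : ∀ x ∈ Set.Icc yhat 1, HasDerivWithinAt u (u' x) (Set.Icc yhat 1) x)
    (hu'c : ContinuousOn u' (Set.Icc yhat 1))
    (huge : ∀ x ∈ Set.Icc yhat 1, 1 ≤ u x)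
    (hu1 : u 1 = 1)
    (hu'0 : u' yhat = 0)
    (henergy : (∫ x in yhat..1, ((u x + 1)/(2*u x)) * (2*(u x - 1)*u' x)^2)
      ≤ ∫ x in yhat..1, (b x - 1/u x) * (u x - 1)^2)
    (hpoincare : (∫ x in yhat..1, (u x - 1)^4)
      ≤ ∫ x in yhat..1, (2*(u x - 1)*u' x)^2) :
    ∀ x ∈ Set.Icc yhat 1, u x = 1 :=
  stmt_18_general bbar yhat hbbar hy1 b u u' hbmeas hb hdiff hu'c huge henergy hpoincare
end

section
/- Let τ > 0 and b̄ ≤ 1, and let u ∈ C¹[ŷ,1] with u ≥ 1, u(1) = 1, u(ŷ) = max u > 1, satisfying ∫_ŷ^1 ((u+1)/(2u))|[(u-1)²]_x|² dx ≤ ∫_ŷ^1 ((u-1)³/u) dx - (u(ŷ)-1)³/(3τ). If τ < 1/3 then this leads to a contradiction: the right-hand side satisfies ∫_ŷ^1 (u-1)³/u dx - (u(ŷ)-1)³/(3τ) ≤ (1 - 1/(3τ))(u(ŷ)-1)³ < 0, while the left-hand side is nonnegative; hence no such u with u(ŷ) > 1 exists. -/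
/-- Non-existence for small relaxation time: if `τ < 1/3`, `b̄ ≤ 1`, and
`u ∈ C¹[ŷ,1]`, `u ≥ 1`, `u(1) = 1`, attains its maximum at `ŷ` with `u(ŷ) > 1`,
and satisfies
`∫_ŷ¹ ((u+1)/(2u))|[(u-1)²]_x|² ≤ ∫_ŷ¹ (u-1)³/u - (u(ŷ)-1)³/(3τ)`,
then we reach a contradiction: the right-hand side is at most
`(1 - 1/(3τ))(u(ŷ)-1)³ < 0` while the left-hand side is nonnegative;
hence no such `u` exists. -/
theorem stmt_19 (τ bbar yhat : ℝ) (hτ0 : 0 < τ) (hτ : τ < 1/3) (hbbar : bbar ≤ 1)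
    (hy0 : 0 ≤ yhat) (hy1 : yhat < 1)
    (u u' : ℝ → ℝ)
    (hdiff : ∀ x ∈ Set.Icc yhat 1, HasDerivWithinAt u (u' x) (Set.Icc yhat 1) x)
    (hu'c : ContinuousOn u' (Set.Icc yhat 1))
    (huge : ∀ x ∈ Set.Icc yhat 1, 1 ≤ u x)
    (hu1 : u 1 = 1)
    (hmax : ∀ x ∈ Set.Icc yhat 1, u x ≤ u yhat)
    (hbig : 1 < u yhat)
    (henergy : (∫ x in yhat..1, ((u x + 1)/(2*u x)) * (2*(u x - 1)*u' x)^2)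
      ≤ (∫ x in yhat..1, (u x - 1)^3/u x) - (u yhat - 1)^3/(3*τ)) :
    False := by
  have hyle : yhat ≤ 1 := le_of_lt hy1
  have hucont : ContinuousOn u (Set.Icc yhat 1) := fun x hx =>
    (hdiff x hx).continuousWithinAt
  set C : ℝ := (u yhat - 1)^3 with hC
  have hs : 0 < u yhat - 1 := by linarith
  have hCpos : 0 < C := by positivity
  -- LHS nonneg
  have hLHS : 0 ≤ ∫ x in yhat..1, ((u x + 1)/(2*u x)) * (2*(u x - 1)*u' x)^2 := by
    apply intervalIntegral.integral_nonneg hyle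
    intro x hx
    have h1 : (1:ℝ) ≤ u x := huge x hx
    have : 0 ≤ (u x + 1)/(2*u x) := by positivity
    positivity
  -- Integral bound
  have hint : (∫ x in yhat..1, (u x - 1)^3/u x) ≤ (1 - yhat) * C := by
    have hIntLHS : IntervalIntegrable (fun x => (u x - 1)^3/u x) MeasureTheory.volume yhat 1 := by
      apply ContinuousOn.intervalIntegrable
      rw [Set.uIcc_of_le hyle]
      apply ContinuousOn.div
      · exact ((hucont.sub continuousOn_const).pow 3)
      · exact hucont
      · intro x hx
        have := huge x hx; linarith
    have hmono : (∫ x in yhat..1, (u x - 1)^3/u x) ≤ ∫ x in yhat..1, C := by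
      apply intervalIntegral.integral_mono_on hyle hIntLHS intervalIntegrable_const
      intro x hx
      have h1 : (1:ℝ) ≤ u x := huge x hx
      have h2 : u x ≤ u yhat := hmax x hx
      have hd : (u x - 1)^3/u x ≤ (u x - 1)^3 := by
        have hx1 : (0:ℝ) ≤ u x - 1 := by linarith
        apply div_le_self (by positivity) h1
      have h3 : (u x - 1)^3 ≤ C := by
        apply pow_le_pow_left₀ (by linarith) (by linarith)
      linarith
    simpa using hmono
  have h1y : (1:ℝ) - yhat ≤ 1 := by linarith
  have hbound : (1 - yhat) * C ≤ C := by nlinarith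
  have hτinv : 1 < 1/(3*τ) := by
    rw [lt_div_iff₀ (by linarith)]; linarith
  have hfinal : C - C/(3*τ) < 0 := by
    have : C < C/(3*τ) := by
      rw [div_eq_mul_inv, ← one_div]
      nlinarith
    linarith
  have : C^1 / (3*τ) = C/(3*τ) := by ring
  nlinarith [henergy, hint, hbound, hLHS, hfinal]
end
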